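/- arXiv:1207.0247 — 9 statements merged into one kernel-verified Lean document; each statement's English description precedes it below -/
import Mathlib

section
/- Let (M,g) be a smooth Riemannian manifold, T a smooth 3-form, ∇^T the metric connection with totally skew-symmetric torsion T, ξ a Killing vector field of unit length with dual 1-form η = g(ξ,−), and Φ the (1,1)-tensor field defined by Φ(X) = ∇^T_X ξ. Then the condition ∇^T_X (d^T η) = −2 X♭ ∧ η for all vector fields X holds if and only if (∇^T_X Φ)(Y) = g(ξ,Y) X − g(X,Y) ξ for all vector fields X and Y. -/
/-- An abstract model of a smooth Riemannian manifold `(M,g)`: `C` is the algebra of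
smooth real-valued functions on `M` and `V` is the `C`-module of smooth vector fields,
together with the directional-derivative action `act` of vector fields on functions,
the Lie bracket of vector fields, and the Riemannian metric `g`. -/
structure VFCalc (C V : Type) [CommRing C] [Algebra ℝ C]
    [AddCommGroup V] [Module C V] : Type where
  /-- the derivative `X f` of a function `f` along a vector field `X` -/
  act : V → C → C
  /-- the Lie bracket `[X, Y]` of vector fields -/
  bracket : V → V → V
  /-- the Riemannian metric `g(X, Y)` -/
  g : V → V → C
  act_mul : ∀ X f₁ f₂, act X (f₁ * f₂) = act X f₁ * f₂ + f₁ * act X f₂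
  act_addF : ∀ X f₁ f₂, act X (f₁ + f₂) = act X f₁ + act X f₂
  act_const : ∀ X (a : ℝ), act X (algebraMap ℝ C a) = 0
  act_addV : ∀ X Y f, act (X + Y) f = act X f + act Y f
  act_smulV : ∀ (f : C) (X : V) (h : C), act (f • X) h = f * act X h
  bracket_antisymm : ∀ X Y, bracket X Y = -bracket Y X
  bracket_addL : ∀ X Y Z, bracket (X + Y) Z = bracket X Z + bracket Y Z
  bracket_leibniz : ∀ X (f : C) Y, bracket X (f • Y) = act X f • Y + f • bracket X Y
  bracket_act : ∀ X Y f, act (bracket X Y) f = act X (act Y f) - act Y (act X f)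
  bracket_jacobi : ∀ X Y Z,
    bracket X (bracket Y Z) + bracket Y (bracket Z X) + bracket Z (bracket X Y) = 0
  g_symm : ∀ X Y, g X Y = g Y X
  g_addL : ∀ X X' Y, g (X + X') Y = g X Y + g X' Y
  g_smulL : ∀ (f : C) X Y, g (f • X) Y = f * g X Y
  g_nondeg : ∀ X, (∀ Z, g X Z = 0) → X = 0

/-- `T` is a 3-form: `C`-multilinear and totally skew-symmetric. -/
def VFCalc.IsThreeForm {C V : Type} [CommRing C] [Algebra ℝ C]
    [AddCommGroup V] [Module C V] (_D : VFCalc C V) (T : V → V → V → C) : Prop :=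
  (∀ X X' Y Z, T (X + X') Y Z = T X Y Z + T X' Y Z) ∧
  (∀ (f : C) X Y Z, T (f • X) Y Z = f * T X Y Z) ∧
  (∀ X Y Z, T X Y Z = -T Y X Z) ∧
  (∀ X Y Z, T X Y Z = -T X Z Y)

namespace VFCalc

variable {C V : Type} [CommRing C] [Algebra ℝ C] [AddCommGroup V] [Module C V]
variable (D : VFCalc C V)

/-- `nab` is an affine connection on vector fields. -/
def IsConnection (nab : V → V → V) : Prop :=
  (∀ X X' Y, nab (X + X') Y = nab X Y + nab X' Y) ∧
  (∀ (f : C) X Y, nab (f • X) Y = f • nab X Y) ∧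
  (∀ X Y Y', nab X (Y + Y') = nab X Y + nab X Y') ∧
  (∀ X (f : C) Y, nab X (f • Y) = D.act X f • Y + f • nab X Y)

/-- `nab` is the Levi-Civita connection of `g`: a torsion-free metric connection. -/
def IsLeviCivita (nab : V → V → V) : Prop :=
  D.IsConnection nab ∧
  (∀ X Y Z, D.act X (D.g Y Z) = D.g (nab X Y) Z + D.g Y (nab X Z)) ∧
  (∀ X Y, nab X Y - nab Y X = D.bracket X Y)

/-- `nabT` is the metric connection with totally skew-symmetric torsion `T`:
`g(∇ᵀ_X Y, Z) = g(∇ᵍ_X Y, Z) + (1/2) T(X,Y,Z)` where `nabG` is the Levi-Civita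
connection. -/
def IsTorsionConnection (T : V → V → V → C) (nabG nabT : V → V → V) : Prop :=
  D.IsConnection nabT ∧
  ∀ X Y Z, D.g (nabT X Y) Z = D.g (nabG X Y) Z + (1 / 2 : ℝ) • T X Y Z

/-- `ξ` is a Killing vector field: the Lie derivative of the metric along `ξ`
vanishes. -/
def IsKilling (ξ : V) : Prop :=
  ∀ X Y, D.act ξ (D.g X Y) = D.g (D.bracket ξ X) Y + D.g X (D.bracket ξ Y)

/-- `e` is a (global) orthonormal frame of vector fields. -/
def IsOrthonormalFrame {ι : Type} [Fintype ι] [DecidableEq ι] (e : ι → V) : Prop :=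
  (∀ a b, D.g (e a) (e b) = if a = b then 1 else 0) ∧
  (∀ X, X = ∑ a, D.g X (e a) • e a)

/-- the exterior derivative of a 1-form -/
def dOne (η : V → C) (X Y : V) : C :=
  D.act X (η Y) - D.act Y (η X) - η (D.bracket X Y)

/-- the exterior derivative of a 2-form -/
def dTwoForm (ω : V → V → C) (X Y Z : V) : C :=
  D.act X (ω Y Z) - D.act Y (ω X Z) + D.act Z (ω X Y)
    - ω (D.bracket X Y) Z + ω (D.bracket X Z) Y - ω (D.bracket Y Z) X

/-- the torsion exterior derivative `dᵀη = dη − Σ_a (e_a ⌟ T) ∧ (e_a ⌟ η)` of a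
1-form `η`, relative to an orthonormal frame `e`. -/
def dTOne {ι : Type} [Fintype ι] (e : ι → V) (T : V → V → V → C) (η : V → C)
    (X Y : V) : C :=
  D.dOne η X Y - ∑ a, η (e a) * T (e a) X Y

/-- the covariant derivative `(∇_X η)(Y)` of a 1-form -/
def covOne (nab : V → V → V) (η : V → C) (X Y : V) : C :=
  D.act X (η Y) - η (nab X Y)

/-- the covariant derivative `(∇_X ω)(Y,Z)` of a 2-form -/
def covTwo (nab : V → V → V) (ω : V → V → C) (X Y Z : V) : C :=
  D.act X (ω Y Z) - ω (nab X Y) Z - ω Y (nab X Z)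

/-- the curvature operator `R(X,Y)Z = ∇_X∇_Y Z − ∇_Y∇_X Z − ∇_{[X,Y]} Z` -/
def curv (nab : V → V → V) (X Y Z : V) : V :=
  nab X (nab Y Z) - nab Y (nab X Z) - nab (D.bracket X Y) Z

end VFCalc

/-!
With `η = g(ξ, -)`, a Killing field makes `∇ᵀξ` skew, so `dη(X, Y) = 2 g(∇ᵀ_X ξ, Y) + T(ξ, X, Y)`
and the torsion correction in `dᵀη` cancels the `T` term: `dᵀη = 2 g(Φ -, -)`. Since `∇ᵀ` is
metric, `(∇ᵀ_X dᵀη)(Y, Z) = 2 g((∇ᵀ_X Φ) Y, Z)`, and both conditions say the same thing after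
cancelling `2` and using that `g` is nondegenerate.
-/

namespace VFCalc

variable {C V : Type} [CommRing C] [Algebra ℝ C] [AddCommGroup V] [Module C V]
variable (D : VFCalc C V)

lemma g_sub_left (X X' Y : V) : D.g (X - X') Y = D.g X Y - D.g X' Y := by
  rw [sub_eq_add_neg, D.g_addL, ← neg_one_smul C X', D.g_smulL]
  ring

lemma eq_iff_forall_g_eq {X Y : V} : (∀ Z, D.g X Z = D.g Y Z) ↔ X = Y := by
  refine ⟨fun h => sub_eq_zero.mp (D.g_nondeg _ fun Z => ?_), fun h _ => h ▸ rfl⟩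
  rw [g_sub_left, h, sub_self]

lemma act_smul (X : V) (a : ℝ) (f : C) : D.act X (a • f) = a • D.act X f := by
  rw [Algebra.smul_def, Algebra.smul_def, D.act_mul, D.act_const, zero_mul, zero_add]

lemma covTwo_smul (nab : V → V → V) (ω : V → V → C) (a : ℝ) (X Y Z : V) :
    D.covTwo nab (a • ω) X Y Z = a • D.covTwo nab ω X Y Z := by
  simp only [covTwo, Pi.smul_apply, act_smul, smul_sub]

variable {D}

lemma IsThreeForm.cyclic {T : V → V → V → C} (hT : D.IsThreeForm T) (X Y Z : V) :
    T X Y Z = T Y Z X := by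
  rw [hT.2.2.1, hT.2.2.2, neg_neg]

lemma IsOrthonormalFrame.sum_g_mul {ι : Type} [Fintype ι] [DecidableEq ι] {e : ι → V}
    (he : D.IsOrthonormalFrame e) (F : V →ₗ[C] C) (X : V) :
    ∑ a, D.g X (e a) * F (e a) = F X := by
  conv_rhs => rw [he.2 X]
  simp only [map_sum, map_smul, smul_eq_mul]

section TorsionConnection

variable {T : V → V → V → C} {nabG nabT : V → V → V}

lemma IsTorsionConnection.act_g (hT : D.IsThreeForm T) (hLC : D.IsLeviCivita nabG)
    (hTC : D.IsTorsionConnection T nabG nabT) (X Y Z : V) :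
    D.act X (D.g Y Z) = D.g (nabT X Y) Z + D.g Y (nabT X Z) := by
  rw [D.g_symm Y (nabT X Z), hTC.2, hTC.2, hT.2.2.2 X Z Y, hLC.2.1, D.g_symm Y, smul_neg]
  abel

lemma IsTorsionConnection.g_torsion (hT : D.IsThreeForm T) (hLC : D.IsLeviCivita nabG)
    (hTC : D.IsTorsionConnection T nabG nabT) (X Y Z : V) :
    D.g (nabT X Y) Z - D.g (nabT Y X) Z = D.g (D.bracket X Y) Z + T X Y Z := by
  rw [hTC.2, hTC.2, hT.2.2.1 Y X Z, ← hLC.2.2 X Y, g_sub_left]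
  module

end TorsionConnection

section MetricConnection

variable {T : V → V → V → C} {nab : V → V → V}

lemma IsKilling.g_nab_add_g_nab (hT : D.IsThreeForm T)
    (hmet : ∀ X Y Z, D.act X (D.g Y Z) = D.g (nab X Y) Z + D.g Y (nab X Z))
    (htor : ∀ X Y Z, D.g (nab X Y) Z - D.g (nab Y X) Z = D.g (D.bracket X Y) Z + T X Y Z)
    {ξ : V} (hK : D.IsKilling ξ) (X Y : V) :
    D.g (nab X ξ) Y + D.g (nab Y ξ) X = 0 := by
  linear_combination hK X Y - hmet ξ X Y - htor ξ X Y - htor ξ Y X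
    + D.g_symm X (D.bracket ξ Y) - D.g_symm X (nab ξ Y) - hT.2.2.2 ξ X Y

lemma dOne_g (hT : D.IsThreeForm T)
    (hmet : ∀ X Y Z, D.act X (D.g Y Z) = D.g (nab X Y) Z + D.g Y (nab X Z))
    (htor : ∀ X Y Z, D.g (nab X Y) Z - D.g (nab Y X) Z = D.g (D.bracket X Y) Z + T X Y Z)
    (ξ X Y : V) :
    D.dOne (D.g ξ) X Y = D.g (nab X ξ) Y - D.g (nab Y ξ) X + T ξ X Y := by
  rw [dOne]
  linear_combination hmet X ξ Y - hmet Y ξ X + htor X Y ξ + D.g_symm ξ (nab X Y)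
    - D.g_symm ξ (nab Y X) - D.g_symm ξ (D.bracket X Y) - hT.cyclic ξ X Y

lemma dTOne_g {ι : Type} [Fintype ι] [DecidableEq ι] {e : ι → V}
    (he : D.IsOrthonormalFrame e) (hT : D.IsThreeForm T)
    (hmet : ∀ X Y Z, D.act X (D.g Y Z) = D.g (nab X Y) Z + D.g Y (nab X Z))
    (htor : ∀ X Y Z, D.g (nab X Y) Z - D.g (nab Y X) Z = D.g (D.bracket X Y) Z + T X Y Z)
    {ξ : V} (hK : D.IsKilling ξ) (X Y : V) :
    D.dTOne e T (D.g ξ) X Y = (2 : ℝ) • D.g (nab X ξ) Y := by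
  have hsum : ∑ a, D.g ξ (e a) * T (e a) X Y = T ξ X Y :=
    he.sum_g_mul (IsLinearMap.mk' (fun W => T W X Y)
      ⟨fun W W' => hT.1 W W' X Y, fun f W => hT.2.1 f W X Y⟩) ξ
  rw [dTOne, dOne_g hT hmet htor, hsum, two_smul]
  linear_combination -hK.g_nab_add_g_nab hT hmet htor X Y

lemma covTwo_g_nab (hmet : ∀ X Y Z, D.act X (D.g Y Z) = D.g (nab X Y) Z + D.g Y (nab X Z))
    (ξ X Y Z : V) :
    D.covTwo nab (fun Y Z => D.g (nab Y ξ) Z) X Y Z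
      = D.g (nab X (nab Y ξ) - nab (nab X Y) ξ) Z := by
  rw [covTwo, hmet, D.g_sub_left]
  ring

end MetricConnection

end VFCalc

theorem statement1_general {C V : Type} [CommRing C] [Algebra ℝ C]
    [AddCommGroup V] [Module C V] (D : VFCalc C V)
    (T : V → V → V → C) (hT : D.IsThreeForm T)
    (nabG nabT : V → V → V) (hLC : D.IsLeviCivita nabG)
    (hTC : D.IsTorsionConnection T nabG nabT)
    {ι : Type} [Fintype ι] [DecidableEq ι] (e : ι → V)
    (he : D.IsOrthonormalFrame e)
    (ξ : V) (hK : D.IsKilling ξ)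
    (η : V → C) (hη : ∀ X, η X = D.g ξ X)
    (Φ : V → V) (hΦ : ∀ X, Φ X = nabT X ξ) :
    (∀ X Y Z, D.covTwo nabT (D.dTOne e T η) X Y Z
        = -(2 : ℝ) • (D.g X Y * η Z - D.g X Z * η Y))
      ↔ (∀ X Y, nabT X (Φ Y) - Φ (nabT X Y) = D.g ξ Y • X - D.g X Y • ξ) := by
  obtain rfl : η = D.g ξ := funext hη
  obtain rfl : Φ = fun X => nabT X ξ := funext hΦ
  have hmet := hTC.act_g hT hLC
  have hdT : D.dTOne e T (D.g ξ) = (2 : ℝ) • fun Y Z => D.g (nabT Y ξ) Z :=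
    funext₂ (VFCalc.dTOne_g he hT hmet (hTC.g_torsion hT hLC) hK)
  have hlhs : ∀ X Y Z, D.covTwo nabT (D.dTOne e T (D.g ξ)) X Y Z
      = (2 : ℝ) • D.g (nabT X (nabT Y ξ) - nabT (nabT X Y) ξ) Z := by
    intro X Y Z
    rw [hdT, VFCalc.covTwo_smul, VFCalc.covTwo_g_nab hmet]
  have hrhs : ∀ X Y Z, -(2 : ℝ) • (D.g X Y * D.g ξ Z - D.g X Z * D.g ξ Y)
      = (2 : ℝ) • D.g (D.g ξ Y • X - D.g X Y • ξ) Z := by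
    intro X Y Z
    rw [D.g_sub_left, D.g_smulL, D.g_smulL, D.g_symm ξ Z, neg_smul, ← smul_neg]
    ring_nf
  simp only [hlhs, hrhs, smul_right_inj (two_ne_zero' ℝ), D.eq_iff_forall_g_eq]

/-- For a unit-length Killing vector field `ξ` with dual 1-form
`η = g(ξ,−)` and `Φ(X) = ∇ᵀ_X ξ`, the condition `∇ᵀ_X (dᵀη) = −2 X♭ ∧ η` (for all `X`)
holds if and only if `(∇ᵀ_X Φ)(Y) = g(ξ,Y) X − g(X,Y) ξ` (for all `X`, `Y`). -/
theorem statement1 {C V : Type} [CommRing C] [Algebra ℝ C]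
    [AddCommGroup V] [Module C V] (D : VFCalc C V)
    (T : V → V → V → C) (hT : D.IsThreeForm T)
    (nabG nabT : V → V → V) (hLC : D.IsLeviCivita nabG)
    (hTC : D.IsTorsionConnection T nabG nabT)
    {ι : Type} [Fintype ι] [DecidableEq ι] (e : ι → V)
    (he : D.IsOrthonormalFrame e)
    (ξ : V) (hK : D.IsKilling ξ) (hunit : D.g ξ ξ = 1)
    (η : V → C) (hη : ∀ X, η X = D.g ξ X)
    (Φ : V → V) (hΦ : ∀ X, Φ X = nabT X ξ) :
    (∀ X Y Z, D.covTwo nabT (D.dTOne e T η) X Y Z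
        = -(2 : ℝ) • (D.g X Y * η Z - D.g X Z * η Y))
      ↔ (∀ X Y, nabT X (Φ Y) - Φ (nabT X Y) = D.g ξ Y • X - D.g X Y • ξ) :=
  statement1_general D T hT nabG nabT hLC hTC e he ξ hK η hη Φ hΦ
end

section
/- Let (M,g) be a smooth Riemannian manifold, T a smooth 3-form, ∇^T the metric connection with totally skew-symmetric torsion T, ξ a Killing vector field of unit length, and Φ(X) = ∇^T_X ξ. If (∇^T_X Φ)(Y) = g(ξ,Y) X − g(X,Y) ξ for all vector fields X, Y, then the curvature of ∇^T satisfies R^T(X,Y)ξ = g(ξ,Y) X − g(ξ,X) Y + Φ(T(X,Y)) for all vector fields X and Y. -/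
/-- If the unit-length Killing vector field `ξ` satisfies
`(∇ᵀ_X Φ)(Y) = g(ξ,Y) X − g(X,Y) ξ` where `Φ(X) = ∇ᵀ_X ξ`, then the curvature of `∇ᵀ`
satisfies `Rᵀ(X,Y)ξ = g(ξ,Y) X − g(ξ,X) Y + Φ(T(X,Y))`, where `T(X,Y)` is the vector
field `g`-dual to `T(X,Y,−)`. -/
theorem statement2 {C V : Type} [CommRing C] [Algebra ℝ C]
    [AddCommGroup V] [Module C V] (D : VFCalc C V)
    (T : V → V → V → C) (hT : D.IsThreeForm T)
    (nabG nabT : V → V → V) (hLC : D.IsLeviCivita nabG)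
    (hTC : D.IsTorsionConnection T nabG nabT)
    (Tv : V → V → V) (hTv : ∀ X Y Z, D.g (Tv X Y) Z = T X Y Z)
    (ξ : V) (hK : D.IsKilling ξ) (hunit : D.g ξ ξ = 1)
    (Φ : V → V) (hΦ : ∀ X, Φ X = nabT X ξ)
    (hb : ∀ X Y, nabT X (Φ Y) - Φ (nabT X Y) = D.g ξ Y • X - D.g X Y • ξ) :
    ∀ X Y, D.curv nabT X Y ξ = D.g ξ Y • X - D.g ξ X • Y + Φ (Tv X Y) := by
  intro X Y
  obtain ⟨hTadd, hTsmul, hTanti1, hTanti2⟩ := hT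
  obtain ⟨⟨hGa, hGs, hGa2, hGl⟩, hGm, hGfree⟩ := hLC
  obtain ⟨⟨hCa, hCs, hCa2, hCl⟩, hmet⟩ := hTC
  have gneg : ∀ (B Z : V), D.g (-B) Z = - D.g B Z := by
    intro B Z
    have := D.g_smulL (-1 : C) B Z
    simpa using this
  have gsub : ∀ A B Z, D.g (A - B) Z = D.g A Z - D.g B Z := by
    intro A B Z
    rw [sub_eq_add_neg, D.g_addL, gneg, sub_eq_add_neg]
  have nsub : ∀ A B, nabT (A - B) ξ = nabT A ξ - nabT B ξ := by
    intro A B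
    have h1 : A - B = A + (-1 : C) • B := by
      rw [neg_one_smul]; abel
    rw [h1, hCa, hCs, neg_one_smul]
    abel
  have htors : ∀ X Y, nabT X Y - nabT Y X - D.bracket X Y = Tv X Y := by
    intro X Y
    have key : ∀ Z, D.g (nabT X Y - nabT Y X - D.bracket X Y - Tv X Y) Z = 0 := by
      intro Z
      rw [gsub, gsub, gsub, hmet, hmet, hTv]
      have h3 : nabG X Y - nabG Y X = D.bracket X Y := hGfree X Y
      have h4 : D.g (nabG X Y) Z - D.g (nabG Y X) Z = D.g (D.bracket X Y) Z := by
        rw [← gsub, h3]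
      have h5 : T Y X Z = - T X Y Z := by
        rw [hTanti1 Y X Z]
      have h6 : (1 / 2 : ℝ) • T X Y Z + (1 / 2 : ℝ) • T X Y Z = T X Y Z := by
        rw [← add_smul]
        norm_num
      rw [h5]
      have := h4
      have expand : D.g (nabG X Y) Z + (1 / 2 : ℝ) • T X Y Z -
          (D.g (nabG Y X) Z + (1 / 2 : ℝ) • -T X Y Z) - D.g (D.bracket X Y) Z -
          T X Y Z = (D.g (nabG X Y) Z - D.g (nabG Y X) Z - D.g (D.bracket X Y) Z)
          + ((1 / 2 : ℝ) • T X Y Z + (1 / 2 : ℝ) • T X Y Z - T X Y Z) := by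
        rw [smul_neg]; ring
      rw [expand, h6, h4]
      ring
    have := D.g_nondeg _ key
    have h7 : nabT X Y - nabT Y X - D.bracket X Y - Tv X Y = 0 := this
    linear_combination (norm := abel) h7
  have hbX := hb X Y
  have hbY := hb Y X
  have e1 : nabT X (Φ Y) = Φ (nabT X Y) + (D.g ξ Y • X - D.g X Y • ξ) := by
    linear_combination (norm := abel) hbX
  have e2 : nabT Y (Φ X) = Φ (nabT Y X) + (D.g ξ X • Y - D.g Y X • ξ) := by
    linear_combination (norm := abel) hbY
  have ePhi : Φ (Tv X Y) = Φ (nabT X Y) - Φ (nabT Y X) - Φ (D.bracket X Y) := by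
    rw [hΦ, hΦ, hΦ, hΦ, ← htors X Y, nsub, nsub]
  have hgsymm : D.g X Y = D.g Y X := D.g_symm X Y
  unfold VFCalc.curv
  rw [← hΦ Y, ← hΦ X, ← hΦ (D.bracket X Y), e1, e2, ePhi, hgsymm]
  abel
end

section
/- Let (M,g) be a smooth Riemannian manifold, T a smooth 3-form, ∇^T the metric connection with totally skew-symmetric torsion T, ξ a Killing vector field of unit length, and Φ(X) = ∇^T_X ξ. If the curvature of ∇^T satisfies R^T(X,Y)ξ = g(ξ,Y) X − g(ξ,X) Y + Φ(T(X,Y)) for all vector fields X, Y, then (∇^T_X Φ)(Y) = g(ξ,Y) X − g(X,Y) ξ for all vector fields X and Y. -/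
lemma aux_symskew {C : Type} [CommRing C] [Algebra ℝ C] {X : Type}
    (a : X → X → X → C) (hsym : ∀ x y z, a x y z = a y x z)
    (hskew : ∀ x y z, a x y z = - a x z y) : ∀ x y z, a x y z = 0 := by
  have h12 : (algebraMap ℝ C) (1/2) * 2 = 1 := by
    rw [show (2:C) = (algebraMap ℝ C) 2 by rw [map_ofNat]]
    rw [← map_mul]; norm_num
  intro x y z
  have h : a x y z = - a x y z := by
    calc a x y z = a y x z := hsym x y z
    _ = -(a y z x) := hskew y x z
    _ = -(a z y x) := by rw [hsym y z x]
    _ = a z x y := by rw [hskew z y x]; ring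
    _ = a x z y := hsym z x y
    _ = - a x y z := hskew x z y
  linear_combination (algebraMap ℝ C (1/2)) * h - (a x y z) * h12

/-- If the curvature of `∇ᵀ` satisfies
`Rᵀ(X,Y)ξ = g(ξ,Y) X − g(ξ,X) Y + Φ(T(X,Y))` for the unit-length Killing vector
field `ξ`, where `Φ(X) = ∇ᵀ_X ξ` and `T(X,Y)` is the vector field `g`-dual to
`T(X,Y,−)`, then `(∇ᵀ_X Φ)(Y) = g(ξ,Y) X − g(X,Y) ξ` for all `X`, `Y`. -/
theorem statement3 {C V : Type} [CommRing C] [Algebra ℝ C]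
    [AddCommGroup V] [Module C V] (D : VFCalc C V)
    (T : V → V → V → C) (hT : D.IsThreeForm T)
    (nabG nabT : V → V → V) (hLC : D.IsLeviCivita nabG)
    (hTC : D.IsTorsionConnection T nabG nabT)
    (Tv : V → V → V) (hTv : ∀ X Y Z, D.g (Tv X Y) Z = T X Y Z)
    (ξ : V) (hK : D.IsKilling ξ) (hunit : D.g ξ ξ = 1)
    (Φ : V → V) (hΦ : ∀ X, Φ X = nabT X ξ)
    (hc : ∀ X Y, D.curv nabT X Y ξ = D.g ξ Y • X - D.g ξ X • Y + Φ (Tv X Y)) :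
    ∀ X Y, nabT X (Φ Y) - Φ (nabT X Y) = D.g ξ Y • X - D.g X Y • ξ := by
  obtain ⟨Tadd, Tsmul, T12, T23⟩ := hT
  obtain ⟨⟨GaddL, GsmulL, GaddR, Gleib⟩, Gmet, Gtor⟩ := hLC
  obtain ⟨⟨NaddL, NsmulL, NaddR, Nleib⟩, hg⟩ := hTC
  have h12 : (algebraMap ℝ C) (1/2) * 2 = 1 := by
    rw [show (2:C) = (algebraMap ℝ C) 2 by rw [map_ofNat]]
    rw [← map_mul]; norm_num
  have g_negL : ∀ X Y : V, D.g (-X) Y = - D.g X Y := by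
    intro X Y
    rw [← neg_one_smul C X, D.g_smulL]; ring
  have g_subL : ∀ X X' Y : V, D.g (X - X') Y = D.g X Y - D.g X' Y := by
    intro X X' Y
    rw [sub_eq_add_neg, D.g_addL, g_negL]; ring
  have N_negL : ∀ X Y : V, nabT (-X) Y = -(nabT X Y) := by
    intro X Y
    rw [← neg_one_smul C X, NsmulL, neg_one_smul]
  have N_subL : ∀ X X' Y : V, nabT (X - X') Y = nabT X Y - nabT X' Y := by
    intro X X' Y
    rw [sub_eq_add_neg, NaddL, N_negL, sub_eq_add_neg]
  have act_zero : ∀ X : V, D.act X 0 = 0 := by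
    intro X
    have := D.act_const X 0
    rwa [map_zero] at this
  -- nabT is a metric connection
  have metricT : ∀ X Y Z, D.act X (D.g Y Z) = D.g (nabT X Y) Z + D.g Y (nabT X Z) := by
    intro X Y Z
    have h1 := hg X Y Z
    have h2 := hg X Z Y
    have h3 := Gmet X Y Z
    have h4 := T23 X Y Z
    have hs1 : D.g Y (nabT X Z) = D.g (nabT X Z) Y := D.g_symm _ _
    have hs2 : D.g Y (nabG X Z) = D.g (nabG X Z) Y := D.g_symm _ _
    rw [Algebra.smul_def] at h1 h2
    linear_combination h3 - h1 - h2 - hs1 + hs2 - (algebraMap ℝ C (1/2)) * h4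
  -- torsion identity for nabT
  have brkT : ∀ X Y : V, D.bracket X Y = nabT X Y - nabT Y X - Tv X Y := by
    intro X Y
    have h : ∀ Z, D.g (D.bracket X Y - (nabT X Y - nabT Y X - Tv X Y)) Z = 0 := by
      intro Z
      rw [g_subL, g_subL, g_subL]
      have h1 := hg X Y Z
      have h2 := hg Y X Z
      have h3' : D.g (nabG X Y) Z - D.g (nabG Y X) Z = D.g (D.bracket X Y) Z := by
        rw [← g_subL, Gtor]
      have h4 := hTv X Y Z
      have h5 := T12 X Y Z
      rw [Algebra.smul_def] at h1 h2
      linear_combination -h1 + h2 + h4 - h3' + (1 - algebraMap ℝ C (1/2)) * h5 + (T Y X Z) * h12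
    have h0 := D.g_nondeg _ h
    rw [sub_eq_zero] at h0
    exact h0
  -- Killing skew-symmetry for nabG
  have skewG : ∀ X Y, D.g (nabG X ξ) Y + D.g (nabG Y ξ) X = 0 := by
    intro X Y
    have h1 := hK X Y
    have h2 := Gmet ξ X Y
    have h3 : D.g (D.bracket ξ X) Y = D.g (nabG ξ X) Y - D.g (nabG X ξ) Y := by
      rw [← g_subL, Gtor]
    have h4 : D.g X (D.bracket ξ Y) = D.g (nabG ξ Y) X - D.g (nabG Y ξ) X := by
      rw [D.g_symm, ← g_subL, Gtor]
    have h5 : D.g X (nabG ξ Y) = D.g (nabG ξ Y) X := D.g_symm _ _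
    linear_combination h1 - h2 + h3 + h4 - h5
  -- skew-symmetry of ω(X,Y) = g(∇ᵀ_X ξ, Y)
  have omega_skew : ∀ X Y, D.g (nabT X ξ) Y + D.g (nabT Y ξ) X = 0 := by
    intro X Y
    have h1 := hg X ξ Y
    have h2 := hg Y ξ X
    have h3 := skewG X Y
    have h4 : T X ξ Y = - T Y ξ X := by
      rw [T12 X ξ Y, T23 ξ X Y, T12 ξ Y X]; ring
    rw [Algebra.smul_def] at h1 h2
    linear_combination h1 + h2 + h3 + (algebraMap ℝ C (1/2)) * h4
  -- the tensor a(X,Y,Z) := g((∇Φ)(X,Y),Z) - g(g(ξ,Y)X - g(X,Y)ξ, Z)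
  set a : V → V → V → C := fun X Y Z =>
    (D.g (nabT X (nabT Y ξ)) Z - D.g (nabT (nabT X Y) ξ) Z)
      - (D.g ξ Y * D.g X Z - D.g X Y * D.g ξ Z) with ha
  have hsym : ∀ X Y Z, a X Y Z = a Y X Z := by
    intro X Y Z
    have hcz := congrArg (fun v => D.g v Z) (hc X Y)
    simp only [VFCalc.curv] at hcz
    rw [brkT X Y, N_subL, N_subL, hΦ] at hcz
    rw [g_subL, g_subL, g_subL, g_subL] at hcz
    rw [D.g_addL, g_subL, D.g_smulL, D.g_smulL] at hcz
    have hs := D.g_symm X Y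
    simp only [ha]
    linear_combination hcz + D.g ξ Z * hs
  have hskew : ∀ X Y Z, a X Y Z = - a X Z Y := by
    intro X Y Z
    have hm1 := metricT X (nabT Y ξ) Z
    have hm2 := metricT X (nabT Z ξ) Y
    have ho1 := omega_skew Y Z
    have ho2 := omega_skew Z (nabT X Y)
    have ho3 := omega_skew Y (nabT X Z)
    have hact := congrArg (D.act X) ho1
    rw [D.act_addF, act_zero] at hact
    simp only [ha]
    linear_combination -hm1 - hm2 + hact - ho2 - ho3
  have hz := aux_symskew a hsym hskew
  intro X Y
  have h : ∀ Z, D.g ((nabT X (Φ Y) - Φ (nabT X Y)) - (D.g ξ Y • X - D.g X Y • ξ)) Z = 0 := by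
    intro Z
    rw [g_subL, g_subL, g_subL, D.g_smulL, D.g_smulL, hΦ, hΦ]
    have := hz X Y Z
    simp only [ha] at this
    linear_combination this
  have h0 := D.g_nondeg _ h
  rw [sub_eq_zero] at h0
  exact h0
end

section
/- Let (M,g,ξ,η,Φ,T) be a T-contact metric manifold. Then the tensor N^{(2)}(X,Y) := (L_{Φ(X)} η)(Y) − (L_{Φ(Y)} η)(X) vanishes identically, and ξ ⌟ d^T η = ξ ⌟ dη = 0. -/
/-!
Evaluating `dᵀη = 2ω` on `(ξ, ξ)` gives `ω(ξ, ξ) = 0`; with `Φ² = -id + η ⊗ ξ` this forces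
`Φ ξ = 0`, and then `η ∘ Φ = 0`. Expanding `ξ` in the orthonormal frame turns the torsion term of
`dᵀη` into `ξ ⌟ T`, so `dη = 2ω + ξ ⌟ T`. As `η ∘ Φ = 0`, Cartan's formula gives
`N⁽²⁾(X, Y) = dη(ΦX, Y) − dη(ΦY, X)`. Its `ω`-part is `2 g(Φ²X, Y) − 2 g(Φ²Y, X) = 0`, and its
`T`-part cancels because the compatibility condition on `T`, taken at `ξ`, reads
`T(ξ, ΦX, Y) = −T(ξ, X, ΦY)`. Finally `ξ ⌟ dᵀη = 2ω(ξ, ·) = 0` and `ξ ⌟ dη = ξ ⌟ dᵀη + T(ξ, ξ, ·) = 0`.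
-/

theorem eq_zero_of_add_self_eq_zero_of_algebra {C V : Type*} [CommRing C] [Algebra ℝ C]
    [AddCommGroup V] [Module C V] {v : V} (h : v + v = 0) : v = 0 := by
  have h2 : algebraMap ℝ C 2⁻¹ * 2 = 1 := by
    rw [← map_ofNat (algebraMap ℝ C) 2, ← map_mul]
    norm_num
  calc v = (algebraMap ℝ C 2⁻¹ * 2) • v := by rw [h2, one_smul]
    _ = algebraMap ℝ C 2⁻¹ • (v + v) := by rw [mul_smul, two_smul]
    _ = 0 := by rw [h, smul_zero]

section AlmostContact

variable {C V : Type} [CommRing C] [AddCommGroup V] [Module C V]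
variable {ξ : V} {η : V → C} {Φ : V → V}

theorem apply_eq_zero_of_sq_eq_neg_add (hΦsmul : ∀ (f : C) (X : V), Φ (f • X) = f • Φ X)
    (hΦ2 : ∀ X, Φ (Φ X) = -X + η X • ξ) (hηξ : η ξ = 1) (h : η (Φ ξ) = 0) : Φ ξ = 0 := by
  have hΦ0 : Φ 0 = 0 := by simpa using hΦsmul 0 0
  have hΦ2ξ : Φ (Φ ξ) = 0 := by rw [hΦ2, hηξ, one_smul, neg_add_cancel]
  have hΦ3ξ := hΦ2 (Φ ξ)
  rw [hΦ2ξ, hΦ0, h, zero_smul, add_zero] at hΦ3ξ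
  exact neg_eq_zero.mp hΦ3ξ.symm

theorem smul_apply_eq_zero_of_sq_eq_neg_add (hΦadd : ∀ X Y, Φ (X + Y) = Φ X + Φ Y)
    (hΦsmul : ∀ (f : C) (X : V), Φ (f • X) = f • Φ X)
    (hΦ2 : ∀ X, Φ (Φ X) = -X + η X • ξ) (hΦξ : Φ ξ = 0) (X : V) : η (Φ X) • ξ = 0 := by
  have hΦneg : ∀ X, Φ (-X) = -Φ X := map_neg (AddMonoidHom.mk' Φ hΦadd)
  have hΦ3 := hΦ2 (Φ X)
  rw [hΦ2 X, hΦadd, hΦsmul, hΦξ, smul_zero, add_zero, hΦneg] at hΦ3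
  exact add_eq_left.mp hΦ3.symm

end AlmostContact

namespace VFCalc

variable {C V : Type} [CommRing C] [Algebra ℝ C] [AddCommGroup V] [Module C V]
variable (D : VFCalc C V)

def lieDerivOne (η : V → C) (X Y : V) : C :=
  D.act X (η Y) - η (D.bracket X Y)

/-- The tensor `N⁽²⁾` of an almost contact structure `(ξ, η, Φ)`. -/
def nTwo (η : V → C) (Φ : V → V) (X Y : V) : C :=
  D.lieDerivOne η (Φ X) Y - D.lieDerivOne η (Φ Y) X

theorem g_zero_left (Y : V) : D.g 0 Y = 0 := by
  simpa using D.g_smulL 0 0 Y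

theorem g_zero_right (X : V) : D.g X 0 = 0 := by
  rw [D.g_symm, g_zero_left]

theorem g_neg_left (X Y : V) : D.g (-X) Y = -D.g X Y := by
  rw [← neg_one_smul C X, D.g_smulL, neg_one_mul]

theorem eq_zero_of_smul_eq_zero_of_g_self_eq_one {ξ : V} (hξ : D.g ξ ξ = 1) {f : C}
    (h : f • ξ = 0) : f = 0 := by
  have hg : D.g (f • ξ) ξ = D.g 0 ξ := congrArg (D.g · ξ) h
  rwa [D.g_smulL, hξ, mul_one, g_zero_left] at hg

theorem act_zero (X : V) : D.act X 0 = 0 := by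
  simpa using D.act_const X 0

theorem bracket_self (X : V) : D.bracket X X = 0 :=
  eq_zero_of_add_self_eq_zero_of_algebra (C := C) <| by
    nth_rewrite 1 [D.bracket_antisymm]
    exact neg_add_cancel _

theorem lieDerivOne_eq_dOne_add (η : V → C) (X Y : V) :
    D.lieDerivOne η X Y = D.dOne η X Y + D.act Y (η X) := by
  rw [lieDerivOne, dOne]
  ring

theorem dOne_g_self (ξ X : V) : D.dOne (D.g ξ) X X = 0 := by
  rw [dOne, bracket_self, g_zero_right, sub_self, sub_zero]

namespace IsThreeForm

variable {D} {T : V → V → V → C}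

theorem zero_left (hT : D.IsThreeForm T) (Y Z : V) : T 0 Y Z = 0 := by
  simpa using hT.2.1 0 0 Y Z

theorem apply_self_left (hT : D.IsThreeForm T) (X Z : V) : T X X Z = 0 :=
  eq_zero_of_add_self_eq_zero_of_algebra (C := C) <| by
    nth_rewrite 1 [hT.2.2.1]
    exact neg_add_cancel _

theorem apply_self_right (hT : D.IsThreeForm T) (X Y : V) : T X Y Y = 0 :=
  eq_zero_of_add_self_eq_zero_of_algebra (C := C) <| by
    nth_rewrite 1 [hT.2.2.2]
    exact neg_add_cancel _

theorem add_middle (hT : D.IsThreeForm T) (X Y Y' Z : V) :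
    T X (Y + Y') Z = T X Y Z + T X Y' Z := by
  rw [hT.2.2.1, hT.1, hT.2.2.1 Y, hT.2.2.1 Y']
  ring

theorem smul_middle (hT : D.IsThreeForm T) (f : C) (X Y Z : V) :
    T X (f • Y) Z = f * T X Y Z := by
  rw [hT.2.2.1, hT.2.1, hT.2.2.1 Y]
  ring

theorem neg_middle (hT : D.IsThreeForm T) (X Y Z : V) : T X (-Y) Z = -T X Y Z := by
  rw [← neg_one_smul C Y, hT.smul_middle, neg_one_mul]

theorem sum_smul_left (hT : D.IsThreeForm T) {ι : Type} [Fintype ι] (f : ι → C) (e : ι → V)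
    (Y Z : V) : T (∑ a, f a • e a) Y Z = ∑ a, f a * T (e a) Y Z := by
  have h := map_sum (AddMonoidHom.mk' (fun X => T X Y Z) fun X X' => hT.1 X X' Y Z)
    (fun a => f a • e a) Finset.univ
  simpa only [AddMonoidHom.mk'_apply, hT.2.1] using h

theorem apply_apply_middle_eq_neg (hT : D.IsThreeForm T) {ξ : V} {η : V → C} {Φ : V → V}
    (hΦ2 : ∀ X, Φ (Φ X) = -X + η X • ξ)
    (hTcond : ∀ X Y Z, T X Y Z = T X (Φ Y) (Φ Z) + T (Φ X) Y (Φ Z) + T (Φ X) (Φ Y) Z)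
    (hΦξ : Φ ξ = 0) (X Y : V) : T ξ (Φ X) Y = -T ξ X (Φ Y) := by
  rw [hTcond, hΦξ, hT.zero_left, hT.zero_left, hΦ2, hT.add_middle, hT.neg_middle,
    hT.smul_middle, hT.apply_self_left]
  ring

end IsThreeForm

section Frame

variable {D} {ι : Type} [Fintype ι] [DecidableEq ι] {e : ι → V} {T : V → V → V → C}

theorem IsOrthonormalFrame.sum_g_mul_threeForm (he : D.IsOrthonormalFrame e)
    (hT : D.IsThreeForm T) (X Y Z : V) : ∑ a, D.g X (e a) * T (e a) Y Z = T X Y Z := by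
  conv_rhs => rw [he.2 X]
  exact (hT.sum_smul_left _ _ _ _).symm

theorem dTOne_g_eq_dOne_sub (he : D.IsOrthonormalFrame e) (hT : D.IsThreeForm T)
    (ξ X Y : V) : D.dTOne e T (D.g ξ) X Y = D.dOne (D.g ξ) X Y - T ξ X Y := by
  rw [dTOne, he.sum_g_mul_threeForm hT]

theorem dTOne_g_self (he : D.IsOrthonormalFrame e) (hT : D.IsThreeForm T) (ξ X : V) :
    D.dTOne e T (D.g ξ) X X = 0 := by
  rw [dTOne_g_eq_dOne_sub he hT, dOne_g_self, hT.apply_self_right, sub_zero]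

end Frame

theorem nTwo_g_eq_zero {ξ : V} {Φ : V → V} {T : V → V → V → C} (hT : D.IsThreeForm T)
    (hΦ2 : ∀ X, Φ (Φ X) = -X + D.g ξ X • ξ) (hgΦ : ∀ X, D.g ξ (Φ X) = 0)
    (hdη : ∀ X Y, D.dOne (D.g ξ) X Y = 2 * D.g (Φ X) Y + T ξ X Y)
    (hTΦ : ∀ X Y, T ξ (Φ X) Y = -T ξ X (Φ Y)) (X Y : V) :
    D.nTwo (D.g ξ) Φ X Y = 0 := by
  have hgΦ2 : ∀ X Y, D.g (Φ (Φ X)) Y = -D.g X Y + D.g ξ X * D.g ξ Y := fun X Y => by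
    rw [hΦ2, D.g_addL, D.g_neg_left, D.g_smulL]
  rw [nTwo, lieDerivOne_eq_dOne_add, lieDerivOne_eq_dOne_add, hgΦ, hgΦ, act_zero, act_zero,
    hdη, hdη, hgΦ2, hgΦ2, hT.2.2.2 ξ (Φ Y), hTΦ, D.g_symm Y X]
  ring

end VFCalc

open VFCalc in
theorem statement8_general {C V : Type} [CommRing C] [Algebra ℝ C]
    [AddCommGroup V] [Module C V] (D : VFCalc C V)
    {ι : Type} [Fintype ι] [DecidableEq ι] (e : ι → V)
    (he : D.IsOrthonormalFrame e)
    (ξ : V) (η : V → C) (Φ : V → V) (T : V → V → V → C)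
    -- almost contact metric structure
    (hη : ∀ X, η X = D.g ξ X) (hηξ : η ξ = 1)
    (hΦadd : ∀ X Y, Φ (X + Y) = Φ X + Φ Y)
    (hΦsmul : ∀ (f : C) (X : V), Φ (f • X) = f • Φ X)
    (hΦ2 : ∀ X, Φ (Φ X) = -X + η X • ξ)
    -- the 3-form `T` and its compatibility with `Φ`
    (hT : D.IsThreeForm T)
    (hTcond : ∀ X Y Z, T X Y Z = T X (Φ Y) (Φ Z) + T (Φ X) Y (Φ Z) + T (Φ X) (Φ Y) Z)
    -- T-contact conditions: `dᵀη = 2ω` and `ξ ⌟ dω = 0`, `ω(X,Y) = g(Φ(X),Y)`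
    (hcontact : ∀ X Y, D.dTOne e T η X Y = 2 * D.g (Φ X) Y) :
    (∀ X Y, (D.act (Φ X) (η Y) - η (D.bracket (Φ X) Y))
        - (D.act (Φ Y) (η X) - η (D.bracket (Φ Y) X)) = 0)
      ∧ (∀ X, D.dTOne e T η ξ X = 0) ∧ (∀ X, D.dOne η ξ X = 0) := by
  obtain rfl : η = D.g ξ := funext hη
  have hdη : ∀ X Y, D.dOne (D.g ξ) X Y = 2 * D.g (Φ X) Y + T ξ X Y := fun X Y => by
    linear_combination hcontact X Y - dTOne_g_eq_dOne_sub he hT ξ X Y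
  have hΦξ : Φ ξ = 0 := by
    refine apply_eq_zero_of_sq_eq_neg_add hΦsmul hΦ2 hηξ ?_
    have h := hcontact ξ ξ
    rw [dTOne_g_self he hT] at h
    rw [D.g_symm]
    exact eq_zero_of_add_self_eq_zero_of_algebra (C := C) (by linear_combination -h)
  have hgΦ : ∀ X, D.g ξ (Φ X) = 0 := fun X =>
    D.eq_zero_of_smul_eq_zero_of_g_self_eq_one hηξ
      (smul_apply_eq_zero_of_sq_eq_neg_add hΦadd hΦsmul hΦ2 hΦξ X)
  refine ⟨D.nTwo_g_eq_zero hT hΦ2 hgΦ hdη (hT.apply_apply_middle_eq_neg hΦ2 hTcond hΦξ),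
    fun X => ?_, fun X => ?_⟩
  · rw [dTOne_g_eq_dOne_sub he hT, hdη, hΦξ, g_zero_left, hT.apply_self_left]
    ring
  · rw [hdη, hΦξ, g_zero_left, hT.apply_self_left]
    ring

/-- On a T-contact metric manifold `(M,g,ξ,η,Φ,T)`, the tensor
`N⁽²⁾(X,Y) = (L_{Φ(X)} η)(Y) − (L_{Φ(Y)} η)(X)` vanishes identically, and
`ξ ⌟ dᵀη = ξ ⌟ dη = 0`. -/
theorem statement8 {C V : Type} [CommRing C] [Algebra ℝ C]
    [AddCommGroup V] [Module C V] (D : VFCalc C V)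
    {ι : Type} [Fintype ι] [DecidableEq ι] (e : ι → V)
    (he : D.IsOrthonormalFrame e)
    (ξ : V) (η : V → C) (Φ : V → V) (T : V → V → V → C)
    -- almost contact metric structure
    (hη : ∀ X, η X = D.g ξ X) (hηξ : η ξ = 1)
    (hΦadd : ∀ X Y, Φ (X + Y) = Φ X + Φ Y)
    (hΦsmul : ∀ (f : C) (X : V), Φ (f • X) = f • Φ X)
    (hΦ2 : ∀ X, Φ (Φ X) = -X + η X • ξ)
    (hΦg : ∀ X Y, D.g (Φ X) (Φ Y) = D.g X Y - η X * η Y)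
    -- the 3-form `T` and its compatibility with `Φ`
    (hT : D.IsThreeForm T)
    (hTcond : ∀ X Y Z, T X Y Z = T X (Φ Y) (Φ Z) + T (Φ X) Y (Φ Z) + T (Φ X) (Φ Y) Z)
    -- T-contact conditions: `dᵀη = 2ω` and `ξ ⌟ dω = 0`, `ω(X,Y) = g(Φ(X),Y)`
    (hcontact : ∀ X Y, D.dTOne e T η X Y = 2 * D.g (Φ X) Y)
    (hdω : ∀ X Y, D.dTwoForm (fun X Y => D.g (Φ X) Y) ξ X Y = 0) :
    (∀ X Y, (D.act (Φ X) (η Y) - η (D.bracket (Φ X) Y))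
        - (D.act (Φ Y) (η X) - η (D.bracket (Φ Y) X)) = 0)
      ∧ (∀ X, D.dTOne e T η ξ X = 0) ∧ (∀ X, D.dOne η ξ X = 0) :=
  statement8_general D e he ξ η Φ T hη hηξ hΦadd hΦsmul hΦ2 hT hTcond hcontact
end

section
/- Let (M,g,ξ,η,Φ,T) be a T-contact metric manifold. Then 2 (L_ξ g)(X,Y) = d^T η(X, (L_ξ Φ)(Y)) for all vector fields X, Y; consequently ξ is a Killing vector field if and only if L_ξ Φ = 0. -/
/-- On a T-contact metric manifold `(M,g,ξ,η,Φ,T)` one has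
`2 (L_ξ g)(X,Y) = dᵀη(X, (L_ξ Φ)(Y))` for all vector fields `X`, `Y`; consequently
`ξ` is a Killing vector field if and only if `L_ξ Φ = 0`. -/
theorem statement9 {C V : Type} [CommRing C] [Algebra ℝ C]
    [AddCommGroup V] [Module C V] (D : VFCalc C V)
    {ι : Type} [Fintype ι] [DecidableEq ι] (e : ι → V)
    (he : D.IsOrthonormalFrame e)
    (ξ : V) (η : V → C) (Φ : V → V) (T : V → V → V → C)
    -- almost contact metric structure
    (hη : ∀ X, η X = D.g ξ X) (hηξ : η ξ = 1)
    (hΦadd : ∀ X Y, Φ (X + Y) = Φ X + Φ Y)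
    (hΦsmul : ∀ (f : C) (X : V), Φ (f • X) = f • Φ X)
    (hΦ2 : ∀ X, Φ (Φ X) = -X + η X • ξ)
    (hΦg : ∀ X Y, D.g (Φ X) (Φ Y) = D.g X Y - η X * η Y)
    -- the 3-form `T` and its compatibility with `Φ`
    (hT : D.IsThreeForm T)
    (hTcond : ∀ X Y Z, T X Y Z = T X (Φ Y) (Φ Z) + T (Φ X) Y (Φ Z) + T (Φ X) (Φ Y) Z)
    -- T-contact conditions: `dᵀη = 2ω` and `ξ ⌟ dω = 0`, `ω(X,Y) = g(Φ(X),Y)`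
    (hcontact : ∀ X Y, D.dTOne e T η X Y = 2 * D.g (Φ X) Y)
    (hdω : ∀ X Y, D.dTwoForm (fun X Y => D.g (Φ X) Y) ξ X Y = 0) :
    (∀ X Y, 2 * (D.act ξ (D.g X Y) - D.g (D.bracket ξ X) Y - D.g X (D.bracket ξ Y))
        = D.dTOne e T η X (D.bracket ξ (Φ Y) - Φ (D.bracket ξ Y)))
      ∧ (D.IsKilling ξ ↔ ∀ Y, D.bracket ξ (Φ Y) - Φ (D.bracket ξ Y) = 0) := by
  obtain ⟨hTa, hTs, hT12, hT23⟩ := hT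
  obtain ⟨hon, hframe⟩ := he
  -- 2 is cancellable in an ℝ-algebra
  have h2 : ∀ t : C, t + t = 0 → t = 0 := by
    intro t ht
    have h : t = (1 / 2 : ℝ) • (t + t) := by
      rw [← two_smul ℝ t, smul_smul]; norm_num
    rw [ht, smul_zero] at h; exact h
  have hact0 : ∀ X : V, D.act X (0 : C) = 0 := by
    intro X
    have h := D.act_addF X 0 0
    rw [add_zero] at h
    exact (left_eq_add.mp h)
  have hact1 : ∀ X : V, D.act X (1 : C) = 0 := by
    intro X
    have h := D.act_const X 1
    rwa [map_one] at h
  have gaddR : ∀ X Y Z : V, D.g X (Y + Z) = D.g X Y + D.g X Z := by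
    intro X Y Z
    rw [D.g_symm, D.g_addL, D.g_symm Y X, D.g_symm Z X]
  have gsmulR : ∀ (f : C) (X Y : V), D.g X (f • Y) = f * D.g X Y := by
    intro f X Y
    rw [D.g_symm, D.g_smulL, D.g_symm Y X]
  have g0L : ∀ Z : V, D.g 0 Z = 0 := by
    intro Z
    have h := D.g_addL 0 0 Z
    rw [add_zero] at h
    exact (left_eq_add.mp h)
  have g0R : ∀ Z : V, D.g Z 0 = 0 := by
    intro Z; rw [D.g_symm]; exact g0L Z
  have gnegL : ∀ X Y : V, D.g (-X) Y = -D.g X Y := by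
    intro X Y
    rw [← neg_one_smul C X, D.g_smulL]; ring
  have gsubR : ∀ X Y Z : V, D.g X (Y - Z) = D.g X Y - D.g X Z := by
    intro X Y Z
    rw [sub_eq_add_neg, gaddR, D.g_symm X (-Z), gnegL, D.g_symm Z X]; ring
  -- T(ξ, ·, ·) via the frame
  have hTsum : ∀ X Y : V, T ξ X Y = ∑ a, η (e a) * T (e a) X Y := by
    intro X Y
    let TL : V →ₗ[C] C :=
      { toFun := fun Z => T Z X Y
        map_add' := fun A B => hTa A B X Y
        map_smul' := fun f A => by simpa using hTs f A X Y }
    have h1 : TL (∑ a, D.g ξ (e a) • e a) = TL ξ := by rw [← hframe ξ]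
    have h2' : T ξ X Y = TL (∑ a, D.g ξ (e a) • e a) := h1.symm
    rw [h2', map_sum]
    refine Finset.sum_congr rfl fun a _ => ?_
    rw [← hη (e a)]
    simp [TL, hTs]
  have hTξξ : ∀ X : V, T ξ ξ X = 0 := by
    intro X
    exact h2 _ (by linear_combination hT12 ξ ξ X)
  have hdTξ : ∀ X : V, D.dTOne e T η ξ X = D.act ξ (η X) - η (D.bracket ξ X) := by
    intro X
    simp only [VFCalc.dTOne, VFCalc.dOne, hηξ, hact1, ← hTsum, hTξξ]
    ring
  -- skewness of dᵀη
  have hηneg : ∀ X : V, η (-X) = -η X := by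
    intro X
    rw [hη, hη, D.g_symm ξ (-X), gnegL, D.g_symm X ξ]
  have hdTskew : ∀ X Y : V, D.dTOne e T η X Y + D.dTOne e T η Y X = 0 := by
    intro X Y
    have hs : (∑ a, η (e a) * T (e a) Y X) = -∑ a, η (e a) * T (e a) X Y := by
      rw [← Finset.sum_neg_distrib]
      refine Finset.sum_congr rfl fun a _ => ?_
      rw [hT23 (e a) X Y]; ring
    simp only [VFCalc.dTOne, VFCalc.dOne, hs, D.bracket_antisymm Y X, hηneg]
    ring
  -- ω is skew
  have homskew : ∀ X Y : V, D.g (Φ X) Y = -D.g (Φ Y) X := by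
    intro X Y
    have h := hdTskew X Y
    rw [hcontact X Y, hcontact Y X] at h
    have h' : D.g (Φ X) Y + D.g (Φ Y) X = 0 := h2 _ (by linear_combination h)
    linear_combination h'
  -- Φ ξ = 0
  have hΦΦξ : Φ (Φ ξ) = 0 := by
    rw [hΦ2 ξ, hηξ, one_smul]
    exact neg_add_cancel ξ
  have hΦξY : ∀ Y : V, D.g (Φ ξ) Y = η (Φ ξ) * η Y := by
    intro Y
    have h := hΦg (Φ ξ) Y
    rw [hΦΦξ, g0L] at h
    linear_combination -h
  have hcξ : η (Φ ξ) = 0 := by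
    have h := homskew ξ ξ
    have h0 : D.g (Φ ξ) ξ = 0 := h2 _ (by linear_combination h)
    rw [hΦξY ξ, hηξ, mul_one] at h0
    exact h0
  have hΦξ : Φ ξ = 0 := by
    apply D.g_nondeg
    intro Z
    rw [hΦξY Z, hcξ]; ring
  have hηΦ : ∀ Y : V, η (Φ Y) = 0 := by
    intro Y
    rw [hη, D.g_symm, homskew Y ξ, hΦξ, g0L]
    ring
  have hLη : ∀ X : V, D.act ξ (η X) = η (D.bracket ξ X) := by
    intro X
    have h := hcontact ξ X
    rw [hdTξ X, hΦξ] at h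
    linear_combination h + 2 * g0L X
  -- L_ξ ω = 0
  have hLω : ∀ X Y : V, D.act ξ (D.g (Φ X) Y)
      = D.g (Φ (D.bracket ξ X)) Y + D.g (Φ X) (D.bracket ξ Y) := by
    intro X Y
    have h := hdω X Y
    simp only [VFCalc.dTwoForm] at h
    rw [hΦξ, g0L, g0L, hact0, hact0] at h
    rw [homskew (D.bracket ξ Y) X, homskew (D.bracket X Y) ξ, hΦξ, g0L] at h
    linear_combination h
  -- the main identity
  have main : ∀ X Y : V,
      2 * (D.act ξ (D.g X Y) - D.g (D.bracket ξ X) Y - D.g X (D.bracket ξ Y))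
        = D.dTOne e T η X (D.bracket ξ (Φ Y) - Φ (D.bracket ξ Y)) := by
    intro X Y
    have e1 : D.g X Y = D.g (Φ X) (Φ Y) + η X * η Y := by
      linear_combination -hΦg X Y
    have a1 := congrArg (D.act ξ) e1
    rw [D.act_addF, D.act_mul] at a1
    have key : D.act ξ (D.g X Y) - D.g (D.bracket ξ X) Y - D.g X (D.bracket ξ Y)
        = D.g (Φ X) (D.bracket ξ (Φ Y)) - D.g (Φ X) (Φ (D.bracket ξ Y)) := by
      linear_combination a1 + hLω X (Φ Y) + hΦg (D.bracket ξ X) Y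
        + hΦg X (D.bracket ξ Y) + η Y * hLη X + η X * hLη Y
    rw [hcontact X (D.bracket ξ (Φ Y) - Φ (D.bracket ξ Y))]
    have hs := gsubR (Φ X) (D.bracket ξ (Φ Y)) (Φ (D.bracket ξ Y))
    linear_combination 2 * key - 2 * hs
  refine ⟨main, ?_, ?_⟩
  · intro hK Y
    apply D.g_nondeg
    intro Z
    set LY := D.bracket ξ (Φ Y) - Φ (D.bracket ξ Y) with hLY
    have hfix : ∀ X : V, D.g (Φ X) LY = 0 := by
      intro X
      have h := main X Y
      rw [hK X Y, hcontact X LY] at h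
      exact h2 _ (by linear_combination -h)
    have hηLY : η LY = 0 := by
      have hsubη : η LY = η (D.bracket ξ (Φ Y)) - η (Φ (D.bracket ξ Y)) := by
        rw [hLY, hη, hη, hη, gsubR]
      rw [hsubη, ← hLη (Φ Y), hηΦ (D.bracket ξ Y), hηΦ Y, hact0]
      ring
    have hz := hfix (Φ Z)
    rw [hΦ2 Z, D.g_addL, gnegL, D.g_smulL, ← hη LY, hηLY] at hz
    rw [D.g_symm]
    linear_combination -hz
  · intro h0 X Y
    have h := main X Y
    rw [h0 Y, hcontact X 0, g0R] at h
    have h' : D.act ξ (D.g X Y) - D.g (D.bracket ξ X) Y - D.g X (D.bracket ξ Y) = 0 :=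
      h2 _ (by linear_combination h)
    linear_combination h'
end

section
/- Let (M,g) be a smooth Riemannian manifold, T a smooth 3-form, ∇^T the metric connection with totally skew-symmetric torsion T, and φ a special Killing p-form with torsion with constant k = −(p+1), i.e. ∇^T_X φ = (1/(p+1)) X ⌟ d^T φ and ∇^T_X (d^T φ) = −(p+1) X♭ ∧ φ for all vector fields X. Then on the metric cone C(M) = M × ℝ_{>0} with metric ḡ = dr² + r²g, the (p+1)-form φ̂ = r^p dr ∧ φ + (r^{p+1}/(p+1)) d^T φ is parallel with respect to the metric connection ∇̄^B on C(M) with totally skew-symmetric torsion B = r² T: ∇̄^B φ̂ = 0. -/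
open Function

section FormLike
variable {C V : Type} [CommRing C] [AddCommGroup V] [Module C V] {n : ℕ}

/-- A bare function that is multilinear and alternating. -/
structure FormLike (n : ℕ) (ψ : (Fin n → V) → C) : Prop where
  add : ∀ (v : Fin n → V) (i : Fin n) (X Y : V),
    ψ (update v i (X + Y)) = ψ (update v i X) + ψ (update v i Y)
  smul : ∀ (v : Fin n → V) (i : Fin n) (f : C) (X : V),
    ψ (update v i (f • X)) = f * ψ (update v i X)
  alt : ∀ (v : Fin n → V) (i j : Fin n), i ≠ j → v i = v j → ψ v = 0

namespace FormLike
variable {ψ : (Fin n → V) → C}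

theorem zero (h : FormLike n ψ) (v : Fin n → V) (i : Fin n) : ψ (update v i 0) = 0 := by
  have := h.smul v i 0 0
  simpa using this

theorem sub (h : FormLike n ψ) (v : Fin n → V) (i : Fin n) (X Y : V) :
    ψ (update v i (X - Y)) = ψ (update v i X) - ψ (update v i Y) := by
  have hneg : ψ (update v i (-Y)) = -ψ (update v i Y) := by
    have := h.smul v i (-1) Y; simpa using this
  rw [sub_eq_add_neg, h.add, hneg, sub_eq_add_neg]

theorem swap (h : FormLike n ψ) (v : Fin n → V) {i j : Fin n} (hij : i ≠ j) :
    ψ (v ∘ Equiv.swap i j) = -ψ v := by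
  have hcomp : (v ∘ Equiv.swap i j) = update (update v j (v i)) i (v j) := by
    funext x
    rcases eq_or_ne x i with rfl | hxi
    · simp [Equiv.swap_apply_left, update_self, update_of_ne hij]
    · rcases eq_or_ne x j with rfl | hxj
      · simp [Equiv.swap_apply_right, update_of_ne hij.symm, update_self,
          update_of_ne (Ne.symm hij)]
      · simp [Equiv.swap_apply_of_ne_of_ne hxi hxj, update_of_ne hxi, update_of_ne hxj]
  have key : ψ (update (update v i (v i + v j)) j (v i + v j)) = 0 := by
    apply h.alt _ i j hij
    rw [update_of_ne hij, update_self, update_self]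
  have e1 : update (update v i (v i + v j)) j (v i) =
      update (update v j (v i)) i (v i + v j) := update_comm hij _ _ _
  have e2 : update (update v i (v i + v j)) j (v j) =
      update (update v j (v j)) i (v i + v j) := update_comm hij _ _ _
  rw [h.add, e1, e2, h.add, h.add, update_eq_self] at key
  have t1 : ψ (update (update v j (v i)) i (v i)) = 0 := by
    apply h.alt _ i j hij
    rw [update_self, update_of_ne (Ne.symm hij), update_self]
  have t4 : ψ (update v i (v j)) = 0 := by
    apply h.alt _ i j hij
    rw [update_self, update_of_ne (Ne.symm hij)]
  rw [t1, t4, update_eq_self] at key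
  rw [hcomp]
  linear_combination key
  
theorem perm (h : FormLike n ψ) (σ : Equiv.Perm (Fin n)) :
    ∀ v : Fin n → V, ψ (v ∘ σ) = (Equiv.Perm.sign σ : ℤ) • ψ v := by
  refine Equiv.Perm.swap_induction_on σ (by intro v; simp) ?_
  intro f x y hxy IH v
  have hc : v ∘ ⇑(Equiv.swap x y * f) = (v ∘ Equiv.swap x y) ∘ f := rfl
  rw [hc, IH, h.swap v hxy, Equiv.Perm.sign_mul, Equiv.Perm.sign_swap hxy]
  simp [smul_neg, neg_smul]

end FormLike
end FormLike



/-- An abstract model of the metric cone `C(M) = M × ℝ_{>0}` with cone metric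
`ḡ = dr² + r² g` over the Riemannian manifold modelled by `D : VFCalc C V`.
Here `Cb` models the smooth functions on the cone, `Vb` the vector fields on the
cone, `r` the radial coordinate function, `dr` the radial vector field `∂/∂r`,
`liftC` the pullback of functions and `liftV` the (r-independent) lift of vector
fields from `M` to the cone. -/
structure ConeData {C V : Type} [CommRing C] [Algebra ℝ C]
    [AddCommGroup V] [Module C V] (D : VFCalc C V) : Type 1 where
  Cb : Type
  [instCbRing : CommRing Cb]
  [instCbAlg : Algebra ℝ Cb]
  Vb : Type
  [instVbGroup : AddCommGroup Vb]
  [instVbMod : Module Cb Vb]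
  Db : VFCalc Cb Vb
  r : Cb
  rinv : Cb
  r_rinv : r * rinv = 1
  liftC : C →+* Cb
  liftV : V → Vb
  liftV_add : ∀ X Y, liftV (X + Y) = liftV X + liftV Y
  liftV_smul : ∀ (f : C) (X : V), liftV (f • X) = liftC f • liftV X
  dr : Vb
  g_dr_dr : Db.g dr dr = 1
  g_dr_lift : ∀ X, Db.g dr (liftV X) = 0
  g_lift_lift : ∀ X Y, Db.g (liftV X) (liftV Y) = r ^ 2 * liftC (D.g X Y)
  bracket_dr_lift : ∀ X, Db.bracket dr (liftV X) = 0
  bracket_lift_lift : ∀ X Y, Db.bracket (liftV X) (liftV Y) = liftV (D.bracket X Y)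
  act_dr_liftC : ∀ f, Db.act dr (liftC f) = 0
  act_dr_r : Db.act dr r = 1
  act_lift_liftC : ∀ X f, Db.act (liftV X) (liftC f) = liftC (D.act X f)
  act_lift_r : ∀ X, Db.act (liftV X) r = 0
  spanning : ∀ W : Vb, W ∈ Submodule.span Cb ({dr} ∪ Set.range liftV)

attribute [instance] ConeData.instCbRing ConeData.instCbAlg
attribute [instance] ConeData.instVbGroup ConeData.instVbMod

namespace ConeData

variable {C V : Type} [CommRing C] [Algebra ℝ C] [AddCommGroup V] [Module C V]
variable {D : VFCalc C V} (CD : ConeData D)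

/-- `J` is a Hermitian structure on the metric cone: an integrable almost complex
structure is required separately via `IsIntegrable`. -/
def IsHermitian (J : CD.Vb → CD.Vb) : Prop :=
  (∀ W W', J (W + W') = J W + J W') ∧
  (∀ (f : CD.Cb) (W : CD.Vb), J (f • W) = f • J W) ∧
  (∀ W, J (J W) = -W) ∧
  (∀ W W', CD.Db.g (J W) (J W') = CD.Db.g W W')

/-- the Nijenhuis tensor of `J` on the cone -/
def nijJ (J : CD.Vb → CD.Vb) (W W' : CD.Vb) : CD.Vb :=
  CD.Db.bracket (J W) (J W') - CD.Db.bracket W W'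
    - J (CD.Db.bracket W (J W')) - J (CD.Db.bracket (J W) W')

/-- `J` is integrable: its Nijenhuis tensor vanishes. -/
def IsIntegrable (J : CD.Vb → CD.Vb) : Prop := ∀ W W', CD.nijJ J W W' = 0

/-- the Bismut torsion `B(X,Y,Z) = dΩ(J(X),J(Y),J(Z))` of the Hermitian structure
`J`, where `Ω(X,Y) = ḡ(J(X),Y)` is the fundamental 2-form. -/
def bismut (J : CD.Vb → CD.Vb) (W₁ W₂ W₃ : CD.Vb) : CD.Cb :=
  CD.Db.dTwoForm (fun U U' => CD.Db.g (J U) U') (J W₁) (J W₂) (J W₃)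

/-- `(M,g,T)` is a Sasaki with torsion (ST) manifold: the metric cone carries a
Kähler with torsion structure (a Hermitian structure with its Bismut torsion)
whose Bismut torsion is `B = r² T`. -/
def IsST (T : V → V → V → C) : Prop :=
  ∃ J : CD.Vb → CD.Vb, CD.IsHermitian J ∧ CD.IsIntegrable J ∧
    (∀ X Y Z : V, CD.bismut J (CD.liftV X) (CD.liftV Y) (CD.liftV Z)
        = CD.r ^ 2 * CD.liftC (T X Y Z)) ∧
    (∀ X Y : V, CD.bismut J CD.dr (CD.liftV X) (CD.liftV Y) = 0)

end ConeData

noncomputable section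

/-- `φ` is a differential `p`-form: `C`-multilinear and alternating. -/
def VFCalc.IsForm {C V : Type} [CommRing C] [Algebra ℝ C]
    [AddCommGroup V] [Module C V] (_D : VFCalc C V)
    (p : ℕ) (φ : (Fin p → V) → C) : Prop :=
  (∀ (v : Fin p → V) (i : Fin p) (X Y : V),
    φ (Function.update v i (X + Y))
      = φ (Function.update v i X) + φ (Function.update v i Y)) ∧
  (∀ (v : Fin p → V) (i : Fin p) (f : C) (X : V),
    φ (Function.update v i (f • X)) = f * φ (Function.update v i X)) ∧
  (∀ (v : Fin p → V) (i j : Fin p), i ≠ j → v i = v j → φ v = 0)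

/-- the wedge product of a `p`-form and a `q`-form -/
def VFCalc.wedge {C V : Type} [CommRing C] [Algebra ℝ C]
    [AddCommGroup V] [Module C V] (_D : VFCalc C V)
    (p q : ℕ) (α : (Fin p → V) → C) (β : (Fin q → V) → C)
    (v : Fin (p + q) → V) : C :=
  (((p.factorial * q.factorial : ℕ) : ℝ))⁻¹ •
    ∑ σ : Equiv.Perm (Fin (p + q)),
      (Equiv.Perm.sign σ : ℤ) •
        (α (fun i => v (σ (Fin.castAdd q i))) * β (fun j => v (σ (Fin.natAdd p j))))

namespace VFCalc

variable {C V : Type} [CommRing C] [Algebra ℝ C] [AddCommGroup V] [Module C V]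
variable (D : VFCalc C V)

/-- the exterior derivative of a `(k+1)`-form -/
def extDer (k : ℕ) (φ : (Fin (k + 1) → V) → C) (v : Fin (k + 2) → V) : C :=
  (∑ i : Fin (k + 2), (-1 : ℤ) ^ (i : ℕ) • D.act (v i) (φ (v ∘ i.succAbove)))
    + ∑ i : Fin (k + 2), ∑ j : Fin (k + 2),
        if h : (i : ℕ) < (j : ℕ) then
          (-1 : ℤ) ^ ((i : ℕ) + (j : ℕ)) •
            φ (Fin.cons (D.bracket (v i) (v j))
                ((v ∘ j.succAbove) ∘
                  (Fin.succAbove (⟨(i : ℕ), by omega⟩ : Fin (k + 1)))))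
        else 0

/-- the torsion exterior derivative `dᵀφ = dφ − Σ_a (e_a ⌟ T) ∧ (e_a ⌟ φ)` of a
`p`-form, relative to an orthonormal frame `e`. -/
def dT {ι : Type} [Fintype ι] (e : ι → V) (T : V → V → V → C) :
    ∀ p : ℕ, ((Fin p → V) → C) → (Fin (p + 1) → V) → C
  | 0, φ => fun v => D.act (v 0) (φ fun i => i.elim0)
  | (m + 1), φ => fun v =>
      D.extDer m φ v -
        ∑ a, D.wedge 2 m (fun w => T (e a) (w 0) (w 1))
          (fun w => φ (Fin.cons (e a) w))
          (fun i => v (Fin.cast (by omega) i))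

/-- the covariant derivative `(∇_X φ)` of a `p`-form -/
def covN (p : ℕ) (nab : V → V → V) (φ : (Fin p → V) → C) (X : V)
    (v : Fin p → V) : C :=
  D.act X (φ v) - ∑ i, φ (Function.update v i (nab X (v i)))

end VFCalc

end


theorem wedge_one_expand {C V : Type} [CommRing C] [Algebra ℝ C] [AddCommGroup V]
    [Module C V] (D : VFCalc C V) {p : ℕ} (α : (Fin 1 → V) → C)
    {β : (Fin p → V) → C} (hβ : FormLike p β) (hc : 1 + p = p + 1)
    (v : Fin (p + 1) → V) :
    D.wedge 1 p α β (fun i => v (Fin.cast hc i)) =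
      ∑ i : Fin (p + 1), (if i = 0 then (1 : ℤ) else -1) •
        (α (fun _ => v i) * β (fun j => v (Equiv.swap 0 i j.succ))) := by
  classical
  unfold VFCalc.wedge
  have step1 : (∑ σ : Equiv.Perm (Fin (1 + p)), (Equiv.Perm.sign σ : ℤ) •
        (α (fun i => v (Fin.cast hc (σ (Fin.castAdd p i)))) *
          β (fun j => v (Fin.cast hc (σ (Fin.natAdd 1 j)))))) =
      ∑ τ : Equiv.Perm (Fin (p + 1)), (Equiv.Perm.sign τ : ℤ) •
        (α (fun _ => v (τ 0)) * β (fun j => v (τ j.succ))) := by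
    have e0 : ∀ i0 : Fin 1, Fin.castAdd p i0 = Fin.cast hc.symm (0 : Fin (p + 1)) := by
      intro i0
      apply Fin.ext
      simp
    have esucc : ∀ j : Fin p, Fin.natAdd 1 j = Fin.cast hc.symm j.succ := by
      intro j
      apply Fin.ext
      simp
      omega
    apply Fintype.sum_equiv ((finCongr hc).permCongr)
    intro σ
    simp only [Equiv.Perm.sign_permCongr, Equiv.permCongr_apply, finCongr_apply,
      finCongr_symm, e0, esucc]
  have step2 : (∑ τ : Equiv.Perm (Fin (p + 1)), (Equiv.Perm.sign τ : ℤ) •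
        (α (fun _ => v (τ 0)) * β (fun j => v (τ j.succ)))) =
      ∑ q : Fin (p + 1) × Equiv.Perm (Fin p),
        (Equiv.Perm.sign (Equiv.Perm.decomposeFin.symm q) : ℤ) •
          (α (fun _ => v (Equiv.Perm.decomposeFin.symm q 0)) *
            β (fun j => v (Equiv.Perm.decomposeFin.symm q j.succ))) :=
    (Fintype.sum_equiv Equiv.Perm.decomposeFin.symm _ _ (fun q => rfl)).symm
  have hterm : ∀ (i : Fin (p + 1)) (e : Equiv.Perm (Fin p)),
      (Equiv.Perm.sign (Equiv.Perm.decomposeFin.symm (i, e)) : ℤ) •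
        (α (fun _ => v (Equiv.Perm.decomposeFin.symm (i, e) 0)) *
          β (fun j => v (Equiv.Perm.decomposeFin.symm (i, e) j.succ))) =
      (if i = 0 then (1 : ℤ) else -1) •
        (α (fun _ => v i) * β (fun j => v (Equiv.swap 0 i j.succ))) := by
    intro i e
    have h1 : β (fun j => v (Equiv.Perm.decomposeFin.symm (i, e) j.succ)) =
        (Equiv.Perm.sign e : ℤ) • β (fun j => v (Equiv.swap 0 i j.succ)) := by
      have : (fun j => v (Equiv.Perm.decomposeFin.symm (i, e) j.succ)) =
          (fun j => v (Equiv.swap 0 i j.succ)) ∘ e := by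
        funext j
        simp [Equiv.Perm.decomposeFin_symm_apply_succ]
      rw [this]
      exact hβ.perm e _
    rw [Equiv.Perm.decomposeFin_symm_apply_zero, h1, Equiv.Perm.decomposeFin.symm_sign]
    rcases Int.units_eq_one_or (Equiv.Perm.sign e) with h | h <;>
      rcases eq_or_ne i 0 with h0 | h0 <;>
      simp [h, h0, smul_smul]
  rw [step1, step2, Fintype.sum_prod_type]
  simp only [hterm]
  simp only [Finset.sum_const, Finset.card_univ, Fintype.card_perm, Fintype.card_fin]
  rw [← Finset.smul_sum]
  rw [← Nat.cast_smul_eq_nsmul ℝ]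
  rw [smul_smul]
  rw [Nat.factorial_one, one_mul]
  rw [inv_mul_cancel₀ (by exact_mod_cast Nat.factorial_ne_zero p), one_smul]
/-- If `φ` is a special Killing `p`-form with torsion with constant
`k = −(p+1)`, i.e. `∇ᵀ_X φ = (1/(p+1)) X ⌟ dᵀφ` and `∇ᵀ_X (dᵀφ) = −(p+1) X♭ ∧ φ`,
then on the metric cone `C(M)` the `(p+1)`-form
`φ̂ = r^p dr ∧ φ + (r^{p+1}/(p+1)) dᵀφ` is parallel with respect to the metric
connection `∇̄ᴮ` on the cone with totally skew-symmetric torsion `B = r² T`. -/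
theorem statement11 {C V : Type} [CommRing C] [Algebra ℝ C]
    [AddCommGroup V] [Module C V] (D : VFCalc C V)
    (T : V → V → V → C) (hT : D.IsThreeForm T)
    (nabG nabT : V → V → V) (hLC : D.IsLeviCivita nabG)
    (hTC : D.IsTorsionConnection T nabG nabT)
    {ι : Type} [Fintype ι] [DecidableEq ι] (e : ι → V)
    (he : D.IsOrthonormalFrame e)
    -- `φ` is a special Killing `p`-form with torsion, with `k = −(p+1)`
    (p : ℕ) (φ : (Fin p → V) → C) (hφ : D.IsForm p φ)
    (hSK1 : ∀ (X : V) (v : Fin p → V),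
      D.covN p nabT φ X v = ((p : ℝ) + 1)⁻¹ • D.dT e T p φ (Fin.cons X v))
    (hSK2 : ∀ (X : V) (v : Fin (p + 1) → V),
      D.covN (p + 1) nabT (D.dT e T p φ) X v
        = -(((p : ℝ) + 1) •
            D.wedge 1 p (fun w => D.g X (w 0)) φ (fun i => v (Fin.cast (by omega) i))))
    -- the metric cone, with the metric connection `∇̄ᴮ` with torsion `B = r² T`
    (CD : ConeData D) (nabB : CD.Vb → CD.Vb → CD.Vb)
    (hBconn : CD.Db.IsConnection nabB)
    (hB1 : nabB CD.dr CD.dr = 0)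
    (hB2 : ∀ X : V, nabB CD.dr (CD.liftV X) = CD.rinv • CD.liftV X)
    (hB3 : ∀ X : V, nabB (CD.liftV X) CD.dr = CD.rinv • CD.liftV X)
    (hB4 : ∀ X Y : V, nabB (CD.liftV X) (CD.liftV Y)
        = CD.liftV (nabT X Y) - (CD.r * CD.liftC (D.g X Y)) • CD.dr)
    -- the `(p+1)`-form `φ̂ = r^p dr ∧ φ + (r^{p+1}/(p+1)) dᵀφ` on the cone
    (φhat : (Fin (p + 1) → CD.Vb) → CD.Cb)
    (hφhat : CD.Db.IsForm (p + 1) φhat)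
    (hφhat1 : ∀ v : Fin p → V,
      φhat (Fin.cons CD.dr (fun i => CD.liftV (v i))) = CD.r ^ p * CD.liftC (φ v))
    (hφhat2 : ∀ v : Fin (p + 1) → V,
      φhat (fun i => CD.liftV (v i))
        = ((p : ℝ) + 1)⁻¹ • (CD.r ^ (p + 1) * CD.liftC (D.dT e T p φ v))) :
    ∀ (W : CD.Vb) (v : Fin (p + 1) → CD.Vb), CD.Db.covN (p + 1) nabB φhat W v = 0 := by
  classical
  obtain ⟨hBaddW, hBsmulW, hBaddY, hBsmulY⟩ := hBconn
  have hF : FormLike (p + 1) φhat := ⟨hφhat.1, hφhat.2.1, hφhat.2.2⟩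
  have hf : FormLike p φ := ⟨hφ.1, hφ.2.1, hφ.2.2⟩
  have hp1 : ((p : ℝ) + 1) ≠ 0 := by positivity
  -- basic facts about `act` on the cone
  have act0 : ∀ W : CD.Vb, CD.Db.act W 0 = 0 := by
    intro W
    have h := CD.Db.act_addF W 0 0
    rw [add_zero] at h
    exact (left_eq_add.mp h)
  have act_one : ∀ W : CD.Vb, CD.Db.act W 1 = 0 := by
    intro W
    have h := CD.Db.act_const W 1
    rwa [map_one] at h
  have actR : ∀ (W : CD.Vb) (a : ℝ) (f : CD.Cb),
      CD.Db.act W (a • f) = a • CD.Db.act W f := by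
    intro W a f
    rw [Algebra.smul_def, CD.Db.act_mul, CD.Db.act_const, Algebra.smul_def]
    ring
  -- facts about powers of r
  have rinvpow : ∀ n : ℕ, CD.rinv * CD.r ^ (n + 1) = CD.r ^ n := by
    intro n
    calc CD.rinv * CD.r ^ (n + 1) = CD.r * CD.rinv * CD.r ^ n := by ring
      _ = CD.r ^ n := by rw [CD.r_rinv, one_mul]
  have actdr_pow : ∀ n : ℕ, CD.Db.act CD.dr (CD.r ^ n) = n • (CD.rinv * CD.r ^ n) := by
    intro n
    induction n with
    | zero => simpa using act_one CD.dr
    | succ n ih =>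
      conv_lhs => rw [pow_succ, CD.Db.act_mul, ih, CD.act_dr_r]
      calc n • (CD.rinv * CD.r ^ n) * CD.r + CD.r ^ n * 1
          = n • (CD.rinv * CD.r ^ (n + 1)) + CD.r ^ n := by
            rw [smul_mul_assoc, mul_assoc, ← pow_succ, mul_one]
        _ = (n + 1) • (CD.rinv * CD.r ^ (n + 1)) := by rw [rinvpow, succ_nsmul]
  have actlift_pow : ∀ (X : V) (n : ℕ), CD.Db.act (CD.liftV X) (CD.r ^ n) = 0 := by
    intro X n
    induction n with
    | zero => simpa using act_one (CD.liftV X)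
    | succ n ih => rw [pow_succ, CD.Db.act_mul, ih, CD.act_lift_r]; ring
  -- liftC and real scalars
  have Lnat : ∀ x : C, CD.liftC (((p : ℝ) + 1) • x) = ((p : ℝ) + 1) • CD.liftC x := by
    intro x
    have hcast : ((p : ℝ) + 1) = ((p + 1 : ℕ) : ℝ) := by push_cast; ring
    rw [hcast, Nat.cast_smul_eq_nsmul, Nat.cast_smul_eq_nsmul, map_nsmul]
  have Lc : ∀ x : C, CD.liftC (((p : ℝ) + 1)⁻¹ • x) = ((p : ℝ) + 1)⁻¹ • CD.liftC x := by
    intro x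
    have h1 : CD.liftC (((p : ℝ) + 1) • (((p : ℝ) + 1)⁻¹ • x)) = CD.liftC x := by
      rw [smul_smul, mul_inv_cancel₀ hp1, one_smul]
    calc CD.liftC (((p : ℝ) + 1)⁻¹ • x)
        = ((p : ℝ) + 1)⁻¹ • (((p : ℝ) + 1) • CD.liftC (((p : ℝ) + 1)⁻¹ • x)) := by
          rw [smul_smul, inv_mul_cancel₀ hp1, one_smul]
      _ = ((p : ℝ) + 1)⁻¹ • CD.liftC (((p : ℝ) + 1) • (((p : ℝ) + 1)⁻¹ • x)) := by
          rw [Lnat]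
      _ = ((p : ℝ) + 1)⁻¹ • CD.liftC x := by rw [h1]
  -- tuple manipulation helpers
  have lupd : ∀ (u : Fin p → V) (i : Fin p) (Y : V),
      Function.update (fun j => CD.liftV (u j)) i (CD.liftV Y)
        = fun j => CD.liftV (Function.update u i Y j) := by
    intro u i Y
    funext j
    rcases eq_or_ne j i with rfl | hj
    · simp
    · simp [Function.update_of_ne hj]
  have lupd1 : ∀ (u : Fin (p + 1) → V) (i : Fin (p + 1)) (Y : V),
      Function.update (fun j => CD.liftV (u j)) i (CD.liftV Y)
        = fun j => CD.liftV (Function.update u i Y j) := by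
    intro u i Y
    funext j
    rcases eq_or_ne j i with rfl | hj
    · simp
    · simp [Function.update_of_ne hj]
  -- the covariant derivative as a function
  set Φ : CD.Vb → (Fin (p + 1) → CD.Vb) → CD.Cb := fun W v =>
    CD.Db.act W (φhat v) -
      ∑ i, φhat (Function.update v i (nabB W (v i))) with hΦdef
  -- linearity of Φ in W
  have PhiAddW : ∀ (W W' : CD.Vb) v, Φ (W + W') v = Φ W v + Φ W' v := by
    intro W W' v
    simp only [hΦdef]
    rw [CD.Db.act_addV]
    have hterm : ∀ i : Fin (p + 1), φhat (Function.update v i (nabB (W + W') (v i)))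
        = φhat (Function.update v i (nabB W (v i)))
          + φhat (Function.update v i (nabB W' (v i))) := by
      intro i
      rw [hBaddW, hF.add]
    rw [Finset.sum_congr rfl (fun i _ => hterm i), Finset.sum_add_distrib]
    ring
  have PhiSmulW : ∀ (f : CD.Cb) (W : CD.Vb) v, Φ (f • W) v = f * Φ W v := by
    intro f W v
    simp only [hΦdef]
    rw [CD.Db.act_smulV]
    have hterm : ∀ i : Fin (p + 1), φhat (Function.update v i (nabB (f • W) (v i)))
        = f * φhat (Function.update v i (nabB W (v i))) := by
      intro i
      rw [hBsmulW, hF.smul]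
    rw [Finset.sum_congr rfl (fun i _ => hterm i), ← Finset.mul_sum]
    ring
  -- multilinearity of Φ in the slots of v
  have PhiUpdAdd : ∀ (W : CD.Vb) (v : Fin (p + 1) → CD.Vb) (i : Fin (p + 1)) (X Y : CD.Vb),
      Φ W (Function.update v i (X + Y))
        = Φ W (Function.update v i X) + Φ W (Function.update v i Y) := by
    intro W v i X Y
    simp only [hΦdef]
    have hterm : ∀ k : Fin (p + 1),
        φhat (Function.update (Function.update v i (X + Y)) k
          (nabB W (Function.update v i (X + Y) k)))
        = φhat (Function.update (Function.update v i X) k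
            (nabB W (Function.update v i X k)))
          + φhat (Function.update (Function.update v i Y) k
              (nabB W (Function.update v i Y k))) := by
      intro k
      rcases eq_or_ne k i with rfl | hk
      · rw [Function.update_self, Function.update_self, Function.update_self,
          Function.update_idem, Function.update_idem, Function.update_idem,
          hBaddY, hF.add]
      · have e1 : Function.update (Function.update v i (X + Y)) k (nabB W (v k))
            = Function.update (Function.update v k (nabB W (v k))) i (X + Y) :=
          Function.update_comm hk.symm _ _ _
        have e2 : Function.update (Function.update v i X) k (nabB W (v k))
            = Function.update (Function.update v k (nabB W (v k))) i X :=
          Function.update_comm hk.symm _ _ _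
        have e3 : Function.update (Function.update v i Y) k (nabB W (v k))
            = Function.update (Function.update v k (nabB W (v k))) i Y :=
          Function.update_comm hk.symm _ _ _
        rw [Function.update_of_ne hk, Function.update_of_ne hk, Function.update_of_ne hk,
          e1, e2, e3, hF.add]
    rw [hF.add, CD.Db.act_addF, Finset.sum_congr rfl (fun k _ => hterm k),
      Finset.sum_add_distrib]
    ring
  have PhiUpdSmul : ∀ (W : CD.Vb) (v : Fin (p + 1) → CD.Vb) (i : Fin (p + 1))
      (f : CD.Cb) (X : CD.Vb),
      Φ W (Function.update v i (f • X)) = f * Φ W (Function.update v i X) := by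
    intro W v i f X
    simp only [hΦdef]
    have hterm : ∀ k : Fin (p + 1),
        φhat (Function.update (Function.update v i (f • X)) k
          (nabB W (Function.update v i (f • X) k)))
        = f * φhat (Function.update (Function.update v i X) k
            (nabB W (Function.update v i X k)))
          + (if k = i then CD.Db.act W f * φhat (Function.update v i X) else 0) := by
      intro k
      rcases eq_or_ne k i with rfl | hk
      · rw [if_pos rfl, Function.update_self, Function.update_self,
          Function.update_idem, Function.update_idem, hBsmulY, hF.add, hF.smul, hF.smul]
        ring
      · have e1 : Function.update (Function.update v i (f • X)) k (nabB W (v k))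
            = Function.update (Function.update v k (nabB W (v k))) i (f • X) :=
          Function.update_comm hk.symm _ _ _
        have e2 : Function.update (Function.update v i X) k (nabB W (v k))
            = Function.update (Function.update v k (nabB W (v k))) i X :=
          Function.update_comm hk.symm _ _ _
        rw [if_neg hk, Function.update_of_ne hk, Function.update_of_ne hk, e1, e2, hF.smul]
        ring
    rw [hF.smul, CD.Db.act_mul, Finset.sum_congr rfl (fun k _ => hterm k),
      Finset.sum_add_distrib, ← Finset.mul_sum, Finset.sum_ite_eq' Finset.univ i]
    simp only [Finset.mem_univ, if_true]
    ring
  -- Φ is alternating in v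
  have PhiAlt : ∀ (W : CD.Vb) (v : Fin (p + 1) → CD.Vb) (i j : Fin (p + 1)),
      i ≠ j → v i = v j → Φ W v = 0 := by
    intro W v i j hij hv
    simp only [hΦdef]
    rw [hF.alt v i j hij hv, act0, zero_sub, neg_eq_zero]
    have hzero : ∀ k ∈ Finset.univ, k ∉ ({i, j} : Finset (Fin (p + 1))) →
        φhat (Function.update v k (nabB W (v k))) = 0 := by
      intro k _ hk
      simp only [Finset.mem_insert, Finset.mem_singleton, not_or] at hk
      apply hF.alt _ i j hij
      rw [Function.update_of_ne (Ne.symm hk.1), Function.update_of_ne (Ne.symm hk.2)]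
      exact hv
    rw [← Finset.sum_subset (Finset.subset_univ ({i, j} : Finset (Fin (p + 1)))) hzero,
      Finset.sum_pair hij]
    have hcomp : Function.update v i (nabB W (v i)) ∘ Equiv.swap i j
        = Function.update v j (nabB W (v j)) := by
      funext x
      rcases eq_or_ne x i with rfl | hxi
      · rw [Function.comp_apply, Equiv.swap_apply_left, Function.update_of_ne hij.symm,
          Function.update_of_ne hij, hv]
      · rcases eq_or_ne x j with rfl | hxj
        · rw [Function.comp_apply, Equiv.swap_apply_right, Function.update_self,
            Function.update_self, hv]
        · rw [Function.comp_apply, Equiv.swap_apply_of_ne_of_ne hxi hxj,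
            Function.update_of_ne hxi, Function.update_of_ne hxj]
    have := hF.swap (Function.update v i (nabB W (v i))) hij
    rw [hcomp] at this
    rw [this]
    ring
  have PhiForm : ∀ W : CD.Vb, FormLike (p + 1) (Φ W) :=
    fun W => ⟨PhiUpdAdd W, fun v i f X => PhiUpdSmul W v i f X, PhiAlt W⟩
  -- evaluation of φhat with dr inserted in slot i
  have EVAL : ∀ (u : Fin (p + 1) → V) (i : Fin (p + 1)),
      φhat (Function.update (fun j => CD.liftV (u j)) i CD.dr)
        = (if i = 0 then (1 : ℤ) else -1) •
            (CD.r ^ p * CD.liftC (φ (fun j => u (Equiv.swap 0 i j.succ)))) := by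
    intro u i
    rcases eq_or_ne i 0 with rfl | hi
    · have hc : Function.update (fun j => CD.liftV (u j)) 0 CD.dr
          = Fin.cons CD.dr (fun j => CD.liftV (u (Equiv.swap (0 : Fin (p + 1)) 0 j.succ))) := by
        funext x
        refine Fin.cases ?_ (fun k => ?_) x
        · rw [Function.update_self, Fin.cons_zero]
        · rw [Function.update_of_ne (Fin.succ_ne_zero k), Fin.cons_succ]
          simp [Equiv.swap_self]
      rw [hc, hφhat1, if_pos rfl, one_smul]
    · have hswap := hF.swap (Function.update (fun j => CD.liftV (u j)) i CD.dr)
        (show (0 : Fin (p + 1)) ≠ i from Ne.symm hi)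
      have hc : (Function.update (fun j => CD.liftV (u j)) i CD.dr) ∘ Equiv.swap (0 : Fin (p + 1)) i
          = Fin.cons CD.dr (fun j => CD.liftV (u (Equiv.swap (0 : Fin (p + 1)) i j.succ))) := by
        funext x
        refine Fin.cases ?_ (fun k => ?_) x
        · rw [Function.comp_apply, Equiv.swap_apply_left, Function.update_self, Fin.cons_zero]
        · rw [Function.comp_apply, Fin.cons_succ]
          rcases eq_or_ne k.succ i with hk | hk
          · rw [hk, Equiv.swap_apply_right, Function.update_of_ne (Ne.symm hi)]
          · rw [Equiv.swap_apply_of_ne_of_ne (Fin.succ_ne_zero k) hk,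
              Function.update_of_ne hk]
      rw [hc, hφhat1] at hswap
      rw [if_neg hi]
      simp only [neg_smul, one_smul]
      linear_combination hswap
  -- the four base computations
  have caseI : ∀ u : Fin (p + 1) → V, Φ CD.dr (fun i => CD.liftV (u i)) = 0 := by
    intro u
    simp only [hΦdef]
    have hupd : ∀ i : Fin (p + 1),
        φhat (Function.update (fun j => CD.liftV (u j)) i (nabB CD.dr (CD.liftV (u i))))
        = CD.rinv * φhat (fun j => CD.liftV (u j)) := by
      intro i
      rw [hB2, hF.smul, lupd1]
      simp only [Function.update_eq_self]
    rw [Finset.sum_congr rfl (fun i _ => hupd i), Finset.sum_const, Finset.card_univ,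
      Fintype.card_fin, hφhat2 u, actR, CD.Db.act_mul, actdr_pow, CD.act_dr_liftC]
    simp only [Algebra.smul_def, nsmul_eq_mul]
    ring
  have caseII : ∀ (X : V) (u : Fin (p + 1) → V),
      Φ (CD.liftV X) (fun i => CD.liftV (u i)) = 0 := by
    intro X u
    simp only [hΦdef]
    have hterm : ∀ i : Fin (p + 1),
        φhat (Function.update (fun j => CD.liftV (u j)) i
          (nabB (CD.liftV X) (CD.liftV (u i))))
        = ((p : ℝ) + 1)⁻¹ • (CD.r ^ (p + 1) *
              CD.liftC (D.dT e T p φ (Function.update u i (nabT X (u i)))))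
          - (CD.r * CD.liftC (D.g X (u i))) *
            ((if i = 0 then (1 : ℤ) else -1) •
              (CD.r ^ p * CD.liftC (φ (fun j => u (Equiv.swap (0 : Fin (p + 1)) i j.succ))))) := by
      intro i
      rw [hB4, hF.sub, hF.smul, lupd1, EVAL u i,
        hφhat2 (Function.update u i (nabT X (u i)))]
    rw [Finset.sum_congr rfl (fun i _ => hterm i), Finset.sum_sub_distrib,
      hφhat2 u, actR, CD.Db.act_mul, actlift_pow, CD.act_lift_liftC]
    have hs1 : (∑ i : Fin (p + 1), ((p : ℝ) + 1)⁻¹ • (CD.r ^ (p + 1) *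
          CD.liftC (D.dT e T p φ (Function.update u i (nabT X (u i))))))
        = ((p : ℝ) + 1)⁻¹ • (CD.r ^ (p + 1) *
            CD.liftC (∑ i : Fin (p + 1), D.dT e T p φ (Function.update u i (nabT X (u i))))) := by
      rw [map_sum, Finset.mul_sum, Finset.smul_sum]
    have hs2 : ∀ i : Fin (p + 1),
        (CD.r * CD.liftC (D.g X (u i))) *
          ((if i = 0 then (1 : ℤ) else -1) •
            (CD.r ^ p * CD.liftC (φ (fun j => u (Equiv.swap (0 : Fin (p + 1)) i j.succ)))))
        = CD.r ^ (p + 1) * ((if i = 0 then (1 : ℤ) else -1) •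
            (CD.liftC (D.g X (u i)) *
              CD.liftC (φ (fun j => u (Equiv.swap (0 : Fin (p + 1)) i j.succ))))) := by
      intro i
      rcases eq_or_ne i 0 with rfl | h
      · simp only [if_true, eq_self_iff_true, one_smul]
        ring
      · simp only [if_neg h, neg_smul, one_smul, mul_neg]
        ring
    rw [hs1, Finset.sum_congr rfl (fun i _ => hs2 i), ← Finset.mul_sum]
    -- use hSK2 together with the wedge expansion
    have hSK2' := hSK2 X u
    unfold VFCalc.covN at hSK2'
    have hw := wedge_one_expand D (fun w => D.g X (w 0)) hf (by omega) u
    rw [hw] at hSK2'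
    have hkey : (∑ i : Fin (p + 1), D.dT e T p φ (Function.update u i (nabT X (u i))))
        = D.act X (D.dT e T p φ u) + ((p : ℝ) + 1) • ∑ i : Fin (p + 1),
            (if i = 0 then (1 : ℤ) else -1) •
              (D.g X (u i) * φ (fun j => u (Equiv.swap (0 : Fin (p + 1)) i j.succ))) := by
      calc (∑ i : Fin (p + 1), D.dT e T p φ (Function.update u i (nabT X (u i))))
          = D.act X (D.dT e T p φ u) - (D.act X (D.dT e T p φ u)
              - ∑ i : Fin (p + 1), D.dT e T p φ (Function.update u i (nabT X (u i)))) := by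
            ring
        _ = _ := by rw [hSK2', sub_neg_eq_add]
    have hLS : CD.liftC (∑ i : Fin (p + 1), D.dT e T p φ (Function.update u i (nabT X (u i))))
        = CD.liftC (D.act X (D.dT e T p φ u)) + ((p : ℝ) + 1) • ∑ i : Fin (p + 1),
            (if i = 0 then (1 : ℤ) else -1) •
              (CD.liftC (D.g X (u i)) *
                CD.liftC (φ (fun j => u (Equiv.swap (0 : Fin (p + 1)) i j.succ)))) := by
      rw [hkey, map_add, Lnat, map_sum]
      simp only [map_zsmul, map_mul]
    have hcz : ∀ z : CD.Cb, ((p : ℝ) + 1)⁻¹ • (((p : ℝ) + 1) • z) = z := by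
      intro z
      rw [smul_smul, inv_mul_cancel₀ hp1, one_smul]
    rw [hLS, mul_add, mul_smul_comm, smul_add, smul_add, hcz, zero_mul, smul_zero, zero_add]
    abel
  have caseIII : ∀ u : Fin p → V,
      Φ CD.dr (Fin.cons CD.dr (fun j => CD.liftV (u j))) = 0 := by
    intro u
    simp only [hΦdef]
    rw [hφhat1 u, Fin.sum_univ_succ, Fin.cons_zero, hB1, hF.zero]
    have hsucc : ∀ i : Fin p,
        φhat (Function.update (Fin.cons CD.dr fun j => CD.liftV (u j)) i.succ
          (nabB CD.dr ((Fin.cons CD.dr fun j => CD.liftV (u j) : Fin (p + 1) → CD.Vb) i.succ)))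
        = CD.rinv * (CD.r ^ p * CD.liftC (φ u)) := by
      intro i
      rw [Fin.cons_succ, hB2, hF.smul, ← Fin.cons_update, lupd]
      simp only [Function.update_eq_self]
      rw [hφhat1 u]
    rw [Finset.sum_congr rfl (fun i _ => hsucc i), Finset.sum_const, Finset.card_univ,
      Fintype.card_fin, CD.Db.act_mul, actdr_pow, CD.act_dr_liftC]
    simp only [nsmul_eq_mul]
    ring
  have caseIV : ∀ (X : V) (u : Fin p → V),
      Φ (CD.liftV X) (Fin.cons CD.dr (fun j => CD.liftV (u j))) = 0 := by
    intro X u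
    simp only [hΦdef]
    rw [Fin.sum_univ_succ]
    have h0 : φhat (Function.update (Fin.cons CD.dr fun j => CD.liftV (u j)) 0
        (nabB (CD.liftV X) ((Fin.cons CD.dr fun j => CD.liftV (u j) : Fin (p + 1) → CD.Vb) 0)))
        = CD.rinv * (((p : ℝ) + 1)⁻¹ •
            (CD.r ^ (p + 1) * CD.liftC (D.dT e T p φ (Fin.cons X u)))) := by
      rw [Fin.cons_zero, hB3, hF.smul, Fin.update_cons_zero]
      have hcons : (Fin.cons (CD.liftV X) (fun j => CD.liftV (u j)) : Fin (p + 1) → CD.Vb)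
          = fun i => CD.liftV ((Fin.cons X u : Fin (p + 1) → V) i) := by
        funext x
        refine Fin.cases ?_ (fun k => ?_) x
        · simp
        · simp
      rw [hcons, hφhat2]
    have hsucc : ∀ i : Fin p,
        φhat (Function.update (Fin.cons CD.dr fun j => CD.liftV (u j)) i.succ
          (nabB (CD.liftV X) ((Fin.cons CD.dr fun j => CD.liftV (u j) : Fin (p + 1) → CD.Vb) i.succ)))
        = CD.r ^ p * CD.liftC (φ (Function.update u i (nabT X (u i))))
          - (CD.r * CD.liftC (D.g X (u i))) * 0 := by
      intro i
      rw [Fin.cons_succ, hB4, hF.sub, hF.smul]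
      have halt : φhat (Function.update (Fin.cons CD.dr fun j => CD.liftV (u j))
          i.succ CD.dr) = 0 := by
        apply hF.alt _ 0 i.succ (Fin.succ_ne_zero i).symm
        rw [Function.update_self, Function.update_of_ne (Fin.succ_ne_zero i).symm,
          Fin.cons_zero]
      rw [halt, ← Fin.cons_update, lupd, hφhat1]
    rw [hφhat1 u, CD.Db.act_mul, actlift_pow, CD.act_lift_liftC, h0,
      Finset.sum_congr rfl (fun i _ => hsucc i)]
    have hSK1' := hSK1 X u
    unfold VFCalc.covN at hSK1'
    have hLact : CD.liftC (D.act X (φ u))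
        = CD.liftC (∑ i, φ (Function.update u i (nabT X (u i))))
          + ((p : ℝ) + 1)⁻¹ • CD.liftC (D.dT e T p φ (Fin.cons X u)) := by
      rw [← Lc, ← map_add]
      congr 1
      rw [← hSK1']
      ring
    rw [hLact, map_sum]
    have hms : (∑ i : Fin p, (CD.r ^ p * CD.liftC (φ (Function.update u i (nabT X (u i))))
        - CD.r * CD.liftC (D.g X (u i)) * 0))
        = CD.r ^ p * ∑ i : Fin p, CD.liftC (φ (Function.update u i (nabT X (u i)))) := by
      rw [Finset.mul_sum]
      apply Finset.sum_congr rfl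
      intro i _
      ring
    rw [hms]
    simp only [Algebra.smul_def]
    linear_combination (-(algebraMap ℝ CD.Cb (((p : ℝ) + 1)⁻¹))
      * CD.liftC (D.dT e T p φ (Fin.cons X u)) * CD.r ^ p) * CD.r_rinv
  -- base case: W and all slots of v in the spanning set
  have hS : ∀ x : CD.Vb, x ∈ ({CD.dr} ∪ Set.range CD.liftV : Set CD.Vb) ↔
      (x = CD.dr ∨ ∃ X, x = CD.liftV X) := by
    intro x
    simp [Set.mem_union, Set.mem_range, eq_comm]
  have hbase : ∀ W : CD.Vb, (W = CD.dr ∨ ∃ X, W = CD.liftV X) →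
      ∀ v : Fin (p + 1) → CD.Vb, (∀ i, v i = CD.dr ∨ ∃ X, v i = CD.liftV X) →
      Φ W v = 0 := by
    intro W hW v hv
    by_cases hdr : ∃ i j : Fin (p + 1), i ≠ j ∧ v i = CD.dr ∧ v j = CD.dr
    · obtain ⟨i, j, hij, hvi, hvj⟩ := hdr
      exact PhiAlt W v i j hij (by rw [hvi, hvj])
    · push_neg at hdr
      by_cases hone : ∃ i0, v i0 = CD.dr
      · obtain ⟨i0, hi0⟩ := hone
        have hlift : ∀ i, i ≠ i0 → ∃ X, v i = CD.liftV X := by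
          intro i hi
          rcases hv i with h | h
          · exact absurd hi0 (hdr i i0 hi h)
          · exact h
        have hu0 : ∀ i : Fin (p + 1), ∃ X : V, i ≠ i0 → v i = CD.liftV X := by
          intro i
          by_cases h : i = i0
          · exact ⟨0, fun h' => absurd h h'⟩
          · obtain ⟨X, hX⟩ := hlift i h
            exact ⟨X, fun _ => hX⟩
        choose u hu using hu0
        have hv' : v = Function.update (fun j => CD.liftV (u j)) i0 CD.dr := by
          funext x
          rcases eq_or_ne x i0 with rfl | hx
          · rw [Function.update_self]; exact hi0
          · rw [Function.update_of_ne hx]; exact hu x hx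
        rw [hv']
        rcases eq_or_ne i0 0 with rfl | hne
        · have hc : Function.update (fun j => CD.liftV (u j)) 0 CD.dr
              = Fin.cons CD.dr (fun j => CD.liftV (u j.succ)) := by
            funext x
            refine Fin.cases ?_ (fun k => ?_) x
            · rw [Function.update_self, Fin.cons_zero]
            · rw [Function.update_of_ne (Fin.succ_ne_zero k), Fin.cons_succ]
          rw [hc]
          rcases hW with rfl | ⟨X, rfl⟩
          · exact caseIII _
          · exact caseIV X _
        · have hswap := (PhiForm W).swap
            (Function.update (fun j => CD.liftV (u j)) i0 CD.dr)
            (show (0 : Fin (p + 1)) ≠ i0 from Ne.symm hne)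
          have hc : (Function.update (fun j => CD.liftV (u j)) i0 CD.dr)
              ∘ Equiv.swap (0 : Fin (p + 1)) i0
              = Fin.cons CD.dr (fun j => CD.liftV (u (Equiv.swap (0 : Fin (p + 1)) i0 j.succ))) := by
            funext x
            refine Fin.cases ?_ (fun k => ?_) x
            · rw [Function.comp_apply, Equiv.swap_apply_left, Function.update_self,
                Fin.cons_zero]
            · rw [Function.comp_apply, Fin.cons_succ]
              rcases eq_or_ne k.succ i0 with hk | hk
              · rw [hk, Equiv.swap_apply_right, Function.update_of_ne (Ne.symm hne)]
              · rw [Equiv.swap_apply_of_ne_of_ne (Fin.succ_ne_zero k) hk,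
                  Function.update_of_ne hk]
          rw [hc] at hswap
          have hz : Φ W (Fin.cons CD.dr
              (fun j => CD.liftV (u (Equiv.swap (0 : Fin (p + 1)) i0 j.succ)))) = 0 := by
            rcases hW with rfl | ⟨X, rfl⟩
            · exact caseIII _
            · exact caseIV X _
          rw [hz] at hswap
          exact neg_eq_zero.mp hswap.symm
      · push_neg at hone
        have hlift : ∀ i, ∃ X, v i = CD.liftV X := by
          intro i
          rcases hv i with h | h
          · exact absurd h (hone i)
          · exact h
        choose u hu using hlift
        have hv' : v = fun i => CD.liftV (u i) := funext hu
        rw [hv']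
        rcases hW with rfl | ⟨X, rfl⟩
        · exact caseI u
        · exact caseII X u
  -- single-variable span argument
  have GspanC : ∀ G : CD.Vb → CD.Cb, (∀ A B, G (A + B) = G A + G B) →
      (∀ (f : CD.Cb) A, G (f • A) = f * G A) →
      (∀ x, (x = CD.dr ∨ ∃ X, x = CD.liftV X) → G x = 0) → ∀ x, G x = 0 := by
    intro G hadd hsmul hb x
    have hx := CD.spanning x
    refine Submodule.span_induction (p := fun y _ => G y = 0) ?_ ?_ ?_ ?_ hx
    · intro y hy
      exact hb y ((hS y).mp hy)
    · have h := hsmul 0 0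
      simpa using h
    · intro a b _ _ ha hb'
      rw [hadd, ha, hb', add_zero]
    · intro c a _ ha
      rw [hsmul, ha, mul_zero]
  -- extend over all slots of v
  have step2 : ∀ W : CD.Vb, (W = CD.dr ∨ ∃ X, W = CD.liftV X) →
      ∀ v : Fin (p + 1) → CD.Vb, Φ W v = 0 := by
    intro W hW
    have Q : ∀ s : Finset (Fin (p + 1)), ∀ v : Fin (p + 1) → CD.Vb,
        (∀ i, i ∉ s → (v i = CD.dr ∨ ∃ X, v i = CD.liftV X)) → Φ W v = 0 := by
      intro s
      induction s using Finset.induction_on with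
      | empty =>
        intro v hv
        exact hbase W hW v (fun i => hv i (Finset.notMem_empty i))
      | @insert j s hj ih =>
        intro v hv
        have hG : ∀ x : CD.Vb, Φ W (Function.update v j x) = 0 ∨ True := fun _ => Or.inr trivial
        have key : ∀ x : CD.Vb, Φ W (Function.update v j x) = 0 := by
          apply GspanC (fun x => Φ W (Function.update v j x))
            (fun A B => PhiUpdAdd W v j A B) (fun f A => PhiUpdSmul W v j f A)
          intro x hx
          apply ih
          intro i hi
          rcases eq_or_ne i j with rfl | hij
          · rwa [Function.update_self]
          · rw [Function.update_of_ne hij]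
            exact hv i (by simp [Finset.mem_insert, hij, hi])
        have := key (v j)
        rwa [Function.update_eq_self] at this
    intro v
    exact Q Finset.univ v (fun i hi => absurd (Finset.mem_univ i) hi)
  -- conclude
  intro W v
  show CD.Db.covN (p + 1) nabB φhat W v = 0
  have hcov : CD.Db.covN (p + 1) nabB φhat W v = Φ W v := rfl
  rw [hcov]
  exact GspanC (fun W => Φ W v) (fun A B => PhiAddW A B v) (fun f A => PhiSmulW f A v)
    (fun x hx => step2 x hx v) W
end

section
/- Let x₁ < x₂ < x₃ and 0 < y₂ < y₃ be real numbers with x₃ = y₂ + y₃ − x₁ − x₂, set y₁ = 0, q = (x₁x₂ + x₁x₃ + x₂x₃ − y₂y₃)/2, and let q₁, q₂ be real numbers with q₁ − q₂ = q. Define X(t) = −4(t − x₁)(t − x₂)(t − x₃), Y(t) = −4 t (t − y₂)(t − y₃), and the vectors in ℝ³: v_i = (2/X′(x_i)) · (q₁ + x_i², −x_i, 1) for i = 1, 2, and ℓ_j = (2/Y′(y_j)) · (q₂ + y_j², −y_j, 1) for j = 2, 3. Set n₁ = (x₃ − x₁)(q + (x₂ − y₂)(x₂ − y₃)), n₂ =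 (x₃ − x₂)(q + (x₁ − y₂)(x₁ − y₃)), m₁ = y₂ (q − (x₁ − y₃)(x₂ − y₃)), m₂ = y₃ (q − (x₁ − y₂)(x₂ − y₂)). Then n₁ v₁ + n₂ v₂ + m₁ ℓ₂ + m₂ ℓ₃ = 0 in ℝ³. -/
/-!
Since `X'(x₁) = -4 (x₁ - x₂)(x₁ - x₃)` and `n₁` carries the factor `x₃ - x₁`, the coefficient
`n₁ · 2 / X'(x₁)` of `(q₁ + x₁², -x₁, 1)` collapses to `f(x₂) / (2 (x₁ - x₂))` with
`f(t) = q + (t - y₂)(t - y₃)`; likewise the other three coefficients become `± f(x₁) / (2 (x₁ - x₂))`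
and `± g(y_j) / (2 (y₂ - y₃))` with `g(t) = (x₁ - t)(x₂ - t) - q`. Once these cancellations are made,
each component of the relation is a polynomial identity after clearing the two denominators
`x₁ - x₂` and `y₂ - y₃`, using `x₃ = y₂ + y₃ - x₁ - x₂` and the definition of `q`.
-/

lemma hasDerivAt_cubic (a b c t : ℝ) :
    HasDerivAt (fun s => -4 * (s - a) * (s - b) * (s - c))
      (-4 * ((t - b) * (t - c) + (t - a) * (t - c) + (t - a) * (t - b))) t := by
  have hlin (r : ℝ) : HasDerivAt (fun s : ℝ => s - r) 1 t := (hasDerivAt_id t).sub_const r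
  refine ((((hlin a).const_mul (-4)).mul (hlin b)).mul (hlin c)).congr_deriv ?_
  simp only [Pi.mul_apply]
  ring

lemma deriv_eq_of_eq_cubic {f : ℝ → ℝ} {a b c : ℝ}
    (hf : ∀ t, f t = -4 * (t - a) * (t - b) * (t - c)) :
    deriv f a = -4 * (a - b) * (a - c) := by
  rw [show f = _ from funext hf, (hasDerivAt_cubic a b c a).deriv]
  ring

lemma sub_mul_two_div_deriv_eq_of_eq_cubic {f : ℝ → ℝ} {a b c : ℝ}
    (hf : ∀ t, f t = -4 * (t - a) * (t - b) * (t - c)) (hac : a ≠ c) (s : ℝ) :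
    (c - a) * s * (2 / deriv f a) = s / (2 * (a - b)) := by
  rw [deriv_eq_of_eq_cubic hf]
  rcases eq_or_ne a b with rfl | hab
  · simp
  · field_simp [sub_ne_zero.mpr hab, sub_ne_zero.mpr hac]
    ring

theorem statement16_general (x₁ x₂ x₃ y₂ y₃ q q₁ q₂ : ℝ)
    (hx12 : x₁ < x₂) (hx23 : x₂ < x₃) (hy2 : 0 < y₂) (hy23 : y₂ < y₃)
    (hsum : x₃ = y₂ + y₃ - x₁ - x₂)
    (hqdef : q = (x₁ * x₂ + x₁ * x₃ + x₂ * x₃ - y₂ * y₃) / 2)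
    (hq12 : q₁ - q₂ = q)
    (X Y : ℝ → ℝ)
    (hX : ∀ t, X t = -4 * (t - x₁) * (t - x₂) * (t - x₃))
    (hY : ∀ t, Y t = -4 * t * (t - y₂) * (t - y₃))
    (v₁ v₂ ℓ₂ ℓ₃ : Fin 3 → ℝ)
    (hv₁ : v₁ = (2 / deriv X x₁) • ![q₁ + x₁ ^ 2, -x₁, 1])
    (hv₂ : v₂ = (2 / deriv X x₂) • ![q₁ + x₂ ^ 2, -x₂, 1])
    (hℓ₂ : ℓ₂ = (2 / deriv Y y₂) • ![q₂ + y₂ ^ 2, -y₂, 1])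
    (hℓ₃ : ℓ₃ = (2 / deriv Y y₃) • ![q₂ + y₃ ^ 2, -y₃, 1])
    (n₁ n₂ m₁ m₂ : ℝ)
    (hn₁ : n₁ = (x₃ - x₁) * (q + (x₂ - y₂) * (x₂ - y₃)))
    (hn₂ : n₂ = (x₃ - x₂) * (q + (x₁ - y₂) * (x₁ - y₃)))
    (hm₁ : m₁ = y₂ * (q - (x₁ - y₃) * (x₂ - y₃)))
    (hm₂ : m₂ = y₃ * (q - (x₁ - y₂) * (x₂ - y₂))) :
    n₁ • v₁ + n₂ • v₂ + m₁ • ℓ₂ + m₂ • ℓ₃ = 0 := by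
  have hw₁ : n₁ * (2 / deriv X x₁) = (q + (x₂ - y₂) * (x₂ - y₃)) / (2 * (x₁ - x₂)) := by
    rw [hn₁, sub_mul_two_div_deriv_eq_of_eq_cubic hX (hx12.trans hx23).ne]
  have hw₂ : n₂ * (2 / deriv X x₂) = (q + (x₁ - y₂) * (x₁ - y₃)) / (2 * (x₂ - x₁)) := by
    rw [hn₂, sub_mul_two_div_deriv_eq_of_eq_cubic (fun t => by rw [hX]; ring) hx23.ne]
  have hw₃ : m₁ * (2 / deriv Y y₂) = ((x₁ - y₃) * (x₂ - y₃) - q) / (2 * (y₂ - y₃)) := by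
    rw [hm₁, ← sub_mul_two_div_deriv_eq_of_eq_cubic (f := Y) (b := y₃) (c := 0)
      (fun t => by rw [hY]; ring) hy2.ne']
    ring
  have hw₄ : m₂ * (2 / deriv Y y₃) = ((x₁ - y₂) * (x₂ - y₂) - q) / (2 * (y₃ - y₂)) := by
    rw [hm₂, ← sub_mul_two_div_deriv_eq_of_eq_cubic (f := Y) (b := y₂) (c := 0)
      (fun t => by rw [hY]; ring) (hy2.trans hy23).ne']
    ring
  have h12 : x₁ - x₂ ≠ 0 := sub_ne_zero.mpr hx12.ne
  have h21 : x₂ - x₁ ≠ 0 := sub_ne_zero.mpr hx12.ne'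
  have h23 : y₂ - y₃ ≠ 0 := sub_ne_zero.mpr hy23.ne
  have h32 : y₃ - y₂ ≠ 0 := sub_ne_zero.mpr hy23.ne'
  obtain rfl : q₂ = q₁ - q := by linarith
  rw [hv₁, hv₂, hℓ₂, hℓ₃, smul_smul, smul_smul, smul_smul, smul_smul, hw₁, hw₂, hw₃, hw₄]
  ext i
  fin_cases i <;>
  · simp only [Fin.isValue, Fin.zero_eta, Fin.mk_one, Fin.reduceFinMk, Pi.add_apply,
      Pi.smul_apply, smul_eq_mul, Pi.zero_apply, Matrix.cons_val_zero, Matrix.cons_val_one,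
      Matrix.cons_val_two, Matrix.head_cons, Matrix.tail_cons]
    field_simp
    subst hsum hqdef
    ring

/-- The linear relation `n₁ v₁ + n₂ v₂ + m₁ ℓ₂ + m₂ ℓ₃ = 0` in `ℝ³`
among the (components of the) normalized Killing vector fields of the
five-dimensional minimal gauged supergravity solution. -/
theorem statement16 (x₁ x₂ x₃ y₂ y₃ q q₁ q₂ : ℝ)
    (hx12 : x₁ < x₂) (hx23 : x₂ < x₃) (hy2 : 0 < y₂) (hy23 : y₂ < y₃)
    (hxy : x₂ < y₂)
    (hsum : x₃ = y₂ + y₃ - x₁ - x₂)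
    (hqdef : q = (x₁ * x₂ + x₁ * x₃ + x₂ * x₃ - y₂ * y₃) / 2)
    (hq12 : q₁ - q₂ = q)
    (X Y : ℝ → ℝ)
    (hX : ∀ t, X t = -4 * (t - x₁) * (t - x₂) * (t - x₃))
    (hY : ∀ t, Y t = -4 * t * (t - y₂) * (t - y₃))
    (v₁ v₂ ℓ₂ ℓ₃ : Fin 3 → ℝ)
    (hv₁ : v₁ = (2 / deriv X x₁) • ![q₁ + x₁ ^ 2, -x₁, 1])
    (hv₂ : v₂ = (2 / deriv X x₂) • ![q₁ + x₂ ^ 2, -x₂, 1])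
    (hℓ₂ : ℓ₂ = (2 / deriv Y y₂) • ![q₂ + y₂ ^ 2, -y₂, 1])
    (hℓ₃ : ℓ₃ = (2 / deriv Y y₃) • ![q₂ + y₃ ^ 2, -y₃, 1])
    (n₁ n₂ m₁ m₂ : ℝ)
    (hn₁ : n₁ = (x₃ - x₁) * (q + (x₂ - y₂) * (x₂ - y₃)))
    (hn₂ : n₂ = (x₃ - x₂) * (q + (x₁ - y₂) * (x₁ - y₃)))
    (hm₁ : m₁ = y₂ * (q - (x₁ - y₃) * (x₂ - y₃)))
    (hm₂ : m₂ = y₃ * (q - (x₁ - y₂) * (x₂ - y₂))) :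
    n₁ • v₁ + n₂ • v₂ + m₁ • ℓ₂ + m₂ • ℓ₃ = 0 :=
  statement16_general x₁ x₂ x₃ y₂ y₃ q q₁ q₂ hx12 hx23 hy2 hy23 hsum hqdef hq12 X Y hX hY v₁ v₂ ℓ₂
    ℓ₃ hv₁ hv₂ hℓ₂ hℓ₃ n₁ n₂ m₁ m₂ hn₁ hn₂ hm₁ hm₂
end

section
/- Let x₁, x₂, y₂, y₃ be real numbers, set x₃ = y₂ + y₃ − x₁ − x₂ and q = (x₁x₂ + x₁x₃ + x₂x₃ − y₂y₃)/2, and define n₁ = (x₃ − x₁)(q + (x₂ − y₂)(x₂ − y₃)), n₂ = (x₃ − x₂)(q + (x₁ − y₂)(x₁ − y₃)), m₁ = y₂ (q − (x₁ − y₃)(x₂ − y₃)), m₂ = y₃ (q − (x₁ − y₂)(x₂ − y₂)). If q = 0, then n₁ + n₂ + m₁ + m₂ = 0. -/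
/-- If `q = 0` then `n₁ + n₂ + m₁ + m₂ = 0`: the regularity condition
of the toric Sasaki–Einstein manifolds `L^{a,b,c}` is recovered. -/
theorem statement17 (x₁ x₂ y₂ y₃ x₃ q n₁ n₂ m₁ m₂ : ℝ)
    (hx₃ : x₃ = y₂ + y₃ - x₁ - x₂)
    (hq : q = (x₁ * x₂ + x₁ * x₃ + x₂ * x₃ - y₂ * y₃) / 2)
    (hn₁ : n₁ = (x₃ - x₁) * (q + (x₂ - y₂) * (x₂ - y₃)))
    (hn₂ : n₂ = (x₃ - x₂) * (q + (x₁ - y₂) * (x₁ - y₃)))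
    (hm₁ : m₁ = y₂ * (q - (x₁ - y₃) * (x₂ - y₃)))
    (hm₂ : m₂ = y₃ * (q - (x₁ - y₂) * (x₂ - y₂)))
    (h0 : q = 0) :
    n₁ + n₂ + m₁ + m₂ = 0 := by
  subst hx₃ hn₁ hn₂ hm₁ hm₂ h0
  linear_combination (-2 * (x₁ + x₂ - y₂ - y₃)) * hq
end

section
/- Let n and ξ be real numbers with n − 12ξ ≠ 0 and n − 16ξ ≠ 0. Define q = ((2 − n) ξ (−n + 4ξ + 4nξ)) / (4 (n − 16ξ)(n − 12ξ)), L(ξ) = 2n² − n³ + 4(n³ − n² − 6n) ξ + 16(n² + 16n + 4) ξ² − 192(7n + 8) ξ³ + 9216 ξ⁴, k = (ξ (−n + 4ξ + 8nξ − 48ξ²) L(ξ)) / (4 (n − 16ξ)(n − 12ξ)³), and x₃ = (−n + 4ξ + 8nξ − 48ξ²) / (4 (n − 12ξ)). Then x₃ is a root of the cubic equation 4x³ + (1 − 12ξ) x² + (8q − 2ξ + 12ξ²) x + k = 0. -/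
/-- The closed-form expression for the third root `x₃` of the cubic
`4x³ + (1 − 12ξ)x² + (8q − 2ξ + 12ξ²)x + k = 0` appearing in the global analysis of
the generalization of `Y^{p,q}`. -/
theorem statement18 (n ξ : ℝ) (h12 : n - 12 * ξ ≠ 0) (h16 : n - 16 * ξ ≠ 0)
    (q L k x₃ : ℝ)
    (hq : q = ((2 - n) * ξ * (-n + 4 * ξ + 4 * n * ξ)) / (4 * (n - 16 * ξ) * (n - 12 * ξ)))
    (hL : L = 2 * n ^ 2 - n ^ 3 + 4 * (n ^ 3 - n ^ 2 - 6 * n) * ξ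
        + 16 * (n ^ 2 + 16 * n + 4) * ξ ^ 2 - 192 * (7 * n + 8) * ξ ^ 3 + 9216 * ξ ^ 4)
    (hk : k = (ξ * (-n + 4 * ξ + 8 * n * ξ - 48 * ξ ^ 2) * L) /
        (4 * (n - 16 * ξ) * (n - 12 * ξ) ^ 3))
    (hx₃ : x₃ = (-n + 4 * ξ + 8 * n * ξ - 48 * ξ ^ 2) / (4 * (n - 12 * ξ))) :
    4 * x₃ ^ 3 + (1 - 12 * ξ) * x₃ ^ 2 + (8 * q - 2 * ξ + 12 * ξ ^ 2) * x₃ + k = 0 := by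
  subst hq hL hk hx₃
  -- `field_simp` looks for the denominators in its normal form `n - ξ * c`.
  rw [mul_comm] at h12 h16
  field_simp
  ring
end
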